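/- arXiv:2404.00831 — 7 statements merged into one kernel-verified Lean document; each statement's English description precedes it below -/
import Mathlib

section
/- There exist universal constants c, C > 0 such that for all integers m ≥ 2, n ≥ 1, and k with C · log₂(m) ≤ k ≤ m, there is a set 𝒜 of allocations of the m items to the n bidders with the following two properties: (1) the family {Aᵢ : A ∈ 𝒜, i ∈ [n]} of all sets that any bidder can possibly receive in 𝒜 has cardinality at most 2^{c·k}; and (2) for every profile of monotone valuations v₁,…,vₙ : 2^[m] → ℝ≥0, max_{A ∈ 𝒜} Σᵢ vᵢ(Aᵢ) ≥ (k/m) · max over all allocations A of Σᵢ vᵢ(Aᵢ). -/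
/-!
Hash the items into `16k` buckets. A uniformly random map `Fin m → Fin (16k)` is injective on a
fixed set of at most `8k` items with probability at least `2⁻⁸ᵏ`, so a union bound over the at
most `(m + 1)⁸ᵏ ≤ 2^(16k²)` such sets yields `2¹⁶ᵏ` maps among which every such set is hashed
injectively by one. The bank consists of the allocations all of whose bundles are preimages
`h⁻¹(T)` under these maps, so at most `2¹⁶ᵏ · 2¹⁶ᵏ` bundles occur.

Given any allocation, a bidder holding more than `4k` items is served alone with all items; the
others are packed into `m / 4k + 1` groups holding at most `8k` items each, and a group is served
by a map `h` injective on its items, each bidder receiving `h⁻¹(h(Aᵢ)) ⊇ Aᵢ`. By monotonicity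
these at most `m / k` allocations of the bank together dominate the given one, so one of them
achieves a `k / m` fraction of its welfare.
-/

open Finset Function

theorem sub_one_pow_self_mul_two_le {q : ℕ} (hq : 1 ≤ q) : (q - 1) ^ q * 2 ≤ q ^ q := by
  have hq' : (0 : ℝ) < q := by exact_mod_cast hq
  have hexp : Real.exp (-1) ≤ 1 / 2 := by
    rw [Real.exp_neg, inv_eq_one_div]
    exact one_div_le_one_div_of_le two_pos (by linarith [Real.add_one_le_exp (1 : ℝ)])
  have key : ((q : ℝ) - 1) ^ q = q ^ q * (1 - 1 / q) ^ q := by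
    rw [← mul_pow, mul_sub, mul_one_div_cancel hq'.ne', mul_one]
  have : (((q - 1) ^ q * 2 : ℕ) : ℝ) ≤ ((q ^ q : ℕ) : ℝ) := by
    push_cast [Nat.cast_sub hq, key]
    have := Real.one_sub_div_pow_le_exp_neg (n := q) (t := 1) (by exact_mod_cast hq)
    nlinarith [pow_pos hq' q]
  exact_mod_cast this

/-- The union bound for `R` independent uniform samples from `X`, phrased by counting. -/
theorem exists_fin_forall_exists_of_card_mul_pow_lt {X σ : Type*} [Fintype X] [DecidableEq X]
    [Nonempty X] (𝒮 : Finset σ) (P : σ → X → Prop) [∀ S, DecidablePred (P S)] {p q R : ℕ}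
    (hbad : ∀ S ∈ 𝒮, q * #{x | ¬P S x} ≤ p * Fintype.card X) (hlt : #𝒮 * p ^ R < q ^ R) :
    ∃ t : Fin R → X, ∀ S ∈ 𝒮, ∃ r, P S (t r) := by
  by_contra! hfail
  have hcover : (univ : Finset (Fin R → X)) ⊆
      𝒮.biUnion fun S => Fintype.piFinset fun _ => {x | ¬P S x} := fun t _ => by
    obtain ⟨S, hS, ht⟩ := hfail t
    exact mem_biUnion.mpr ⟨S, hS, Fintype.mem_piFinset.mpr fun r => by simpa using ht r⟩
  have hX : 0 < Fintype.card X ^ R := pow_pos Fintype.card_pos R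
  have : q ^ R * Fintype.card X ^ R ≤ #𝒮 * p ^ R * Fintype.card X ^ R := calc
    q ^ R * Fintype.card X ^ R = q ^ R * #(univ : Finset (Fin R → X)) := by simp
    _ ≤ q ^ R * ∑ S ∈ 𝒮, #{x | ¬P S x} ^ R := by
      gcongr
      refine (card_le_card hcover).trans (card_biUnion_le.trans_eq ?_)
      simp [Fintype.card_piFinset]
    _ = ∑ S ∈ 𝒮, (q * #{x | ¬P S x}) ^ R := by rw [mul_sum]; simp [mul_pow]
    _ ≤ ∑ S ∈ 𝒮, (p * Fintype.card X) ^ R :=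
      sum_le_sum fun S hS => Nat.pow_le_pow_left (hbad S hS) R
    _ = #𝒮 * p ^ R * Fintype.card X ^ R := by simp [mul_pow, mul_assoc]
  exact absurd (Nat.le_of_mul_le_mul_right this hX) (not_le.mpr hlt)

section Hashing

variable {α β : Type*} [Fintype α] [DecidableEq α]

theorem card_filter_card_le_le (s : ℕ) :
    #{S : Finset α | #S ≤ s} ≤ (Fintype.card α + 1) ^ s := calc
  #{S : Finset α | #S ≤ s} ≤ #((range (s + 1)).biUnion fun j => powersetCard j univ) := by
    refine card_le_card fun S hS => mem_biUnion.mpr ⟨#S, ?_, ?_⟩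
    · exact mem_range.mpr (Nat.lt_succ_of_le (mem_filter.mp hS).2)
    · exact mem_powersetCard.mpr ⟨subset_univ S, rfl⟩
  _ ≤ ∑ j ∈ range (s + 1), (Fintype.card α).choose j := by
    simpa only [card_powersetCard, card_univ] using
      card_biUnion_le (s := range (s + 1)) (t := fun j => powersetCard j (univ : Finset α))
  _ ≤ ∑ j ∈ range (s + 1), Fintype.card α ^ j * 1 ^ (s - j) * s.choose j := by
    refine sum_le_sum fun j hj => ?_
    rw [one_pow, mul_one]
    exact (Nat.choose_le_pow _ _).trans
      (Nat.le_mul_of_pos_right _ (Nat.choose_pos (Nat.lt_succ_iff.mp (mem_range.mp hj))))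
  _ = (Fintype.card α + 1) ^ s := (add_pow _ _ _).symm

def injOnEquiv (S : Finset α) :
    {f : α → β // Set.InjOn f S} ≃ (S ↪ β) × ({x // x ∉ S} → β) :=
  ((Equiv.piEquivPiSubtypeProd (· ∈ S) fun _ => β).subtypeEquiv
      (p := fun f => Set.InjOn f S) (q := fun p => Injective p.1)
      fun _ => Set.injOn_iff_injective).trans <|
    Equiv.prodSubtypeFstEquivSubtypeProd.trans <|
      (Equiv.subtypeInjectiveEquivEmbedding _ _).prodCongr (Equiv.refl _)

theorem card_filter_injOn [Fintype β] [DecidableEq β] (S : Finset α) :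
    #{f : α → β | Set.InjOn f S} =
      (Fintype.card β).descFactorial #S * Fintype.card β ^ (Fintype.card α - #S) := by
  rw [← Fintype.card_subtype, Fintype.card_congr (injOnEquiv S), Fintype.card_prod,
    Fintype.card_embedding_eq, Fintype.card_fun, Fintype.card_coe, Fintype.card_subtype_compl,
    Fintype.card_coe]

theorem pow_le_two_pow_mul_card_filter_injOn {s : ℕ} {S : Finset α} (hS : #S ≤ s) :
    (2 * s) ^ Fintype.card α ≤ 2 ^ s * #{f : α → Fin (2 * s) | Set.InjOn f S} := by
  have hSα : #S ≤ Fintype.card α := card_le_univ S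
  rw [card_filter_injOn, Fintype.card_fin]
  calc (2 * s) ^ Fintype.card α = 2 ^ #S * s ^ #S * (2 * s) ^ (Fintype.card α - #S) := by
        rw [← mul_pow, ← pow_add, Nat.add_sub_cancel' hSα]
    _ ≤ 2 ^ s * (2 * s).descFactorial #S * (2 * s) ^ (Fintype.card α - #S) := by
        gcongr
        · exact one_le_two
        · calc s ^ #S ≤ (2 * s + 1 - #S) ^ #S := Nat.pow_le_pow_left (by omega) _
            _ ≤ _ := Nat.pow_sub_le_descFactorial _ _
    _ = _ := by ring

theorem exists_finset_injOn_of_card_add_one_pow_lt {s L : ℕ} (hs : 0 < s)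
    (hL : (Fintype.card α + 1) ^ s < 2 ^ L) :
    ∃ H : Finset (α → Fin (2 * s)), #H ≤ 2 ^ s * L ∧
      ∀ S : Finset α, #S ≤ s → ∃ h ∈ H, Set.InjOn h S := by
  have : NeZero (2 * s) := ⟨by omega⟩
  have hbad : ∀ S ∈ ({S : Finset α | #S ≤ s} : Finset _),
      2 ^ s * #{f : α → Fin (2 * s) | ¬Set.InjOn f S} ≤
        (2 ^ s - 1) * Fintype.card (α → Fin (2 * s)) := by
    intro S hS
    have hgood := pow_le_two_pow_mul_card_filter_injOn (mem_filter.mp hS).2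
    have hsplit := card_filter_add_card_filter_not (s := (univ : Finset (α → Fin (2 * s))))
      (p := fun f => Set.InjOn f S)
    rw [card_univ, Fintype.card_fun, Fintype.card_fin] at hsplit
    rw [Fintype.card_fun, Fintype.card_fin, Nat.sub_one_mul, ← hsplit, mul_add]
    omega
  have hlt : #({S : Finset α | #S ≤ s} : Finset _) * (2 ^ s - 1) ^ (2 ^ s * L) <
      (2 ^ s) ^ (2 ^ s * L) := calc
    _ < 2 ^ L * ((2 ^ s - 1) ^ 2 ^ s) ^ L := by
      rw [← pow_mul]
      gcongr
      · exact pow_pos (Nat.sub_pos_of_lt (Nat.one_lt_two_pow hs.ne')) _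
      · exact (card_filter_card_le_le s).trans_lt hL
    _ = ((2 ^ s - 1) ^ 2 ^ s * 2) ^ L := by ring
    _ ≤ ((2 ^ s) ^ 2 ^ s) ^ L := by gcongr; exact sub_one_pow_self_mul_two_le Nat.one_le_two_pow
    _ = _ := by rw [pow_mul]
  obtain ⟨t, ht⟩ := exists_fin_forall_exists_of_card_mul_pow_lt _
    (fun (S : Finset α) (f : α → Fin (2 * s)) => Set.InjOn f S) hbad hlt
  refine ⟨univ.image t, card_image_le.trans_eq (by simp), fun S hS => ?_⟩
  obtain ⟨r, hr⟩ := ht S (mem_filter.mpr ⟨mem_univ S, hS⟩)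
  exact ⟨t r, mem_image_of_mem t (mem_univ r), hr⟩

end Hashing

theorem exists_fiber_sum_le_two_mul {ι : Type*} [DecidableEq ι] (u : Finset ι) (w : ι → ℕ)
    {b G : ℕ} (hw : ∀ i ∈ u, w i ≤ b) (hG : ∑ i ∈ u, w i < G * b) :
    ∃ g : ι → Fin G, ∀ j, ∑ i ∈ u with g i = j, w i ≤ 2 * b := by
  have : NeZero G := ⟨by rintro rfl; simp at hG⟩
  induction u using Finset.induction_on with
  | empty => exact ⟨0, fun _ => by simp⟩
  | insert a u ha ih =>
    rw [sum_insert ha] at hG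
    obtain ⟨g, hg⟩ := ih (fun i hi => hw i (mem_insert_of_mem hi)) (by omega)
    -- by pigeonhole some bin has load `< b`, so it has room for `a`
    obtain ⟨j₀, -, hj₀⟩ := exists_sum_fiber_lt_of_maps_to_of_sum_lt_nsmul (s := u) (t := univ)
      (f := g) (w := w) (b := b) (fun _ _ => mem_univ _)
      (by rw [card_univ, Fintype.card_fin, smul_eq_mul]; omega)
    refine ⟨update g a j₀, fun j => ?_⟩
    have hu : ∀ i ∈ u, update g a j₀ i = g i := fun i hi =>
      update_of_ne (ne_of_mem_of_not_mem hi ha) _ _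
    rw [filter_insert, update_self, filter_congr fun i hi => by rw [hu i hi]]
    split_ifs with h
    · subst h
      rw [sum_insert (by simp [ha])]
      have := hw a (mem_insert_self a u)
      omega
    · exact hg j

section Allocations

variable {ι α β : Type*} [Fintype α] [DecidableEq β]

theorem sum_card_le_card_of_pairwise_disjoint [DecidableEq α] {A : ι → Finset α}
    (hA : Pairwise (Disjoint on A)) (t : Finset ι) : ∑ i ∈ t, #(A i) ≤ Fintype.card α :=
  (card_biUnion fun _ _ _ _ hij => hA hij).symm.trans_le (card_le_univ _)

theorem card_filter_lt_card_mul_le [Fintype ι] [DecidableEq α] {A : ι → Finset α}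
    (hA : Pairwise (Disjoint on A)) (b : ℕ) : #{i | b < #(A i)} * (b + 1) ≤ Fintype.card α := by
  rw [← smul_eq_mul]
  exact (card_nsmul_le_sum _ (fun i => #(A i)) (b + 1) fun i hi => (mem_filter.mp hi).2).trans
    (sum_card_le_card_of_pairwise_disjoint hA _)

def hashSets [DecidableEq α] [Fintype β] (H : Finset (α → β)) : Finset (Finset α) :=
  (H ×ˢ (univ : Finset (Finset β))).image fun p => ({x | p.1 x ∈ p.2} : Finset α)

theorem card_hashSets_le [DecidableEq α] [Fintype β] (H : Finset (α → β)) :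
    #(hashSets H) ≤ #H * 2 ^ Fintype.card β :=
  card_image_le.trans_eq <| by rw [card_product, card_univ, Fintype.card_finset]

theorem filter_mem_hashSets [DecidableEq α] [Fintype β] {H : Finset (α → β)} {h : α → β}
    (hh : h ∈ H) (T : Finset β) : ({x | h x ∈ T} : Finset α) ∈ hashSets H :=
  mem_image.mpr ⟨(h, T), mem_product.mpr ⟨hh, mem_univ T⟩, rfl⟩

theorem empty_mem_hashSets [DecidableEq α] [Fintype β] {H : Finset (α → β)} (hH : H.Nonempty) :
    ∅ ∈ hashSets H := by
  obtain ⟨h, hh⟩ := hH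
  simpa using filter_mem_hashSets hh ∅

theorem univ_mem_hashSets [DecidableEq α] [Fintype β] {H : Finset (α → β)} (hH : H.Nonempty) :
    univ ∈ hashSets H := by
  obtain ⟨h, hh⟩ := hH
  simpa using filter_mem_hashSets hh univ

def soloAllocation [DecidableEq ι] (i j : ι) : Finset α :=
  if j = i then univ else ∅

theorem pairwise_disjoint_soloAllocation [DecidableEq ι] (i : ι) :
    Pairwise (Disjoint on (soloAllocation (α := α) i)) := by
  intro j j' hjj'
  simp only [onFun, soloAllocation]
  split_ifs <;> simp_all

theorem soloAllocation_mem_hashSets [DecidableEq ι] [DecidableEq α] [Fintype β]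
    {H : Finset (α → β)} (hH : H.Nonempty) (i j : ι) : soloAllocation i j ∈ hashSets H := by
  unfold soloAllocation
  split_ifs
  exacts [univ_mem_hashSets hH, empty_mem_hashSets hH]

def hashAllocation [DecidableEq ι] (h : α → β) (t : Finset ι) (A : ι → Finset α) (i : ι) :
    Finset α :=
  if i ∈ t then ({x | h x ∈ (A i).image h} : Finset α) else ∅

theorem subset_hashAllocation [DecidableEq ι] {h : α → β} {t : Finset ι} {A : ι → Finset α}
    {i : ι} (hi : i ∈ t) : A i ⊆ hashAllocation h t A i := fun x hx => by
  simpa [hashAllocation, hi] using ⟨x, hx, rfl⟩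

theorem hashAllocation_mem_hashSets [DecidableEq ι] [DecidableEq α] [Fintype β]
    {H : Finset (α → β)} {h : α → β} (hh : h ∈ H) (t : Finset ι) (A : ι → Finset α) (i : ι) :
    hashAllocation h t A i ∈ hashSets H := by
  unfold hashAllocation
  split_ifs
  exacts [filter_mem_hashSets hh _, empty_mem_hashSets ⟨h, hh⟩]

theorem pairwise_disjoint_hashAllocation [DecidableEq ι] [DecidableEq α] {h : α → β}
    {t : Finset ι} {A : ι → Finset α} (hA : Pairwise (Disjoint on A))
    (hh : Set.InjOn h (t.biUnion A)) : Pairwise (Disjoint on (hashAllocation h t A)) := by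
  intro i j hij
  simp only [onFun, hashAllocation]
  split_ifs with hi hj
  · refine disjoint_left.mpr fun x hxi hxj => ?_
    simp only [mem_filter, mem_univ, true_and, mem_image] at hxi hxj
    obtain ⟨y, hy, hyx⟩ := hxi
    obtain ⟨z, hz, hzx⟩ := hxj
    have hyz : y = z :=
      hh (by simpa using ⟨i, hi, hy⟩) (by simpa using ⟨j, hj, hz⟩) (hyx.trans hzx.symm)
    exact disjoint_left.mp (hA hij) hy (hyz ▸ hz)
  all_goals simp

theorem exists_cover_by_hashAllocations [Fintype ι] [DecidableEq ι] [DecidableEq α] [Fintype β]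
    {H : Finset (α → β)} {b : ℕ} (hb : 0 < b)
    (hH : ∀ S : Finset α, #S ≤ 2 * b → ∃ h ∈ H, Set.InjOn h S)
    {A : ι → Finset α} (hA : Pairwise (Disjoint on A)) :
    ∃ 𝒞 : Finset (ι → Finset α), 𝒞.Nonempty ∧
      (∀ B ∈ 𝒞, Pairwise (Disjoint on B) ∧ ∀ i, B i ∈ hashSets H) ∧
      (∀ i, ∃ B ∈ 𝒞, A i ⊆ B i) ∧
      #𝒞 ≤ Fintype.card α / (b + 1) + (Fintype.card α / b + 1) := by
  have hH₀ : H.Nonempty := let ⟨h, hh, _⟩ := hH ∅ (by simp); ⟨h, hh⟩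
  set big : Finset ι := {i | b < #(A i)}
  set small : Finset ι := {i | #(A i) ≤ b}
  obtain ⟨g, hg⟩ := exists_fiber_sum_le_two_mul small (fun i => #(A i))
    (G := Fintype.card α / b + 1) (fun i hi => (mem_filter.mp hi).2)
    ((sum_card_le_card_of_pairwise_disjoint hA small).trans_lt
      (by rw [add_one_mul]; exact Nat.lt_div_mul_add hb))
  choose h hhH hinj using fun j => hH ({i ∈ small | g i = j}.biUnion A)
    ((card_biUnion fun _ _ _ _ hij => hA hij).trans_le (hg j))
  let bin (j : Fin (Fintype.card α / b + 1)) : ι → Finset α :=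
    hashAllocation (h j) {i ∈ small | g i = j} A
  refine ⟨big.image soloAllocation ∪ univ.image bin,
    ⟨bin 0, mem_union_right _ (mem_image_of_mem _ (mem_univ 0))⟩, fun B hB => ?_, fun i => ?_, ?_⟩
  · rcases mem_union.mp hB with hB | hB <;> obtain ⟨i, -, rfl⟩ := mem_image.mp hB
    · exact ⟨pairwise_disjoint_soloAllocation i, soloAllocation_mem_hashSets hH₀ i⟩
    · exact ⟨pairwise_disjoint_hashAllocation hA (hinj i), hashAllocation_mem_hashSets (hhH i) _ _⟩
  · by_cases hi : b < #(A i)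
    · exact ⟨soloAllocation i, mem_union_left _ (mem_image_of_mem _ (by simpa [big] using hi)),
        by simp [soloAllocation]⟩
    · exact ⟨bin (g i), mem_union_right _ (mem_image_of_mem _ (mem_univ _)),
        subset_hashAllocation (by simpa [small] using hi)⟩
  · calc #(big.image soloAllocation ∪ univ.image bin) ≤ #big + (Fintype.card α / b + 1) :=
          (card_union_le _ _).trans (add_le_add card_image_le (card_image_le.trans_eq (by simp)))
      _ ≤ _ := by
        gcongr
        exact (Nat.le_div_iff_mul_le b.succ_pos).mpr (card_filter_lt_card_mul_le hA b)

end Allocations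

theorem exists_mem_sum_div_card_le {ι α : Type*} [Fintype ι] (v : ι → Finset α → ℝ)
    (hv : ∀ i S, 0 ≤ v i S) (hmono : ∀ i, Monotone (v i)) {A : ι → Finset α}
    {𝒞 : Finset (ι → Finset α)} (h𝒞 : 𝒞.Nonempty) (hcover : ∀ i, ∃ B ∈ 𝒞, A i ⊆ B i) :
    ∃ B ∈ 𝒞, (∑ i, v i (A i)) / #𝒞 ≤ ∑ i, v i (B i) := by
  have hcard : (0 : ℝ) < #𝒞 := by exact_mod_cast h𝒞.card_pos
  refine exists_le_of_sum_le h𝒞 ?_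
  rw [sum_const, nsmul_eq_mul, mul_div_cancel₀ _ hcard.ne', sum_comm]
  refine sum_le_sum fun i _ => ?_
  obtain ⟨B, hB, hAB⟩ := hcover i
  exact (hmono i hAB).trans (single_le_sum (fun B _ => hv i (B i)) hB)

theorem le_two_pow_of_logb_le {m k : ℕ} (hm : 0 < m) (h : Real.logb 2 m ≤ k) : m ≤ 2 ^ k := by
  rw [Real.logb_le_iff_le_rpow one_lt_two (by exact_mod_cast hm), Real.rpow_natCast] at h
  exact_mod_cast h

theorem add_one_pow_lt_two_pow {m k : ℕ} (hk : 0 < k) (hm : m ≤ 2 ^ k) :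
    (m + 1) ^ (2 * (4 * k)) < 2 ^ (16 * k ^ 2 + 1) := calc
  (m + 1) ^ (2 * (4 * k)) ≤ (2 ^ (2 * k)) ^ (2 * (4 * k)) := by
    gcongr
    calc m + 1 ≤ 2 ^ k * 2 := by have := Nat.one_le_two_pow (n := k); omega
      _ = 2 ^ (k + 1) := (pow_succ 2 k).symm
      _ ≤ 2 ^ (2 * k) := Nat.pow_le_pow_right two_pos (by omega)
  _ = 2 ^ (16 * k ^ 2) := by rw [← pow_mul]; ring_nf
  _ < 2 ^ (16 * k ^ 2 + 1) := Nat.pow_lt_pow_right one_lt_two (by omega)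

theorem sixteen_mul_sq_add_one_le_two_pow (k : ℕ) : 16 * k ^ 2 + 1 ≤ 2 ^ (8 * k) := calc
  16 * k ^ 2 + 1 ≤ (4 * k + 1) ^ 2 := by ring_nf; omega
  _ ≤ (2 ^ (4 * k)) ^ 2 := Nat.pow_le_pow_left (Nat.lt_two_pow_self) 2
  _ = 2 ^ (8 * k) := by rw [← pow_mul]; ring_nf

theorem exists_hashSets_card_le_of_le_two_pow {m k : ℕ} (hk : 0 < k) (hm : m ≤ 2 ^ k) :
    ∃ H : Finset (Fin m → Fin (2 * (2 * (4 * k)))), #(hashSets H) ≤ 2 ^ (32 * k) ∧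
      ∀ S : Finset (Fin m), #S ≤ 2 * (4 * k) → ∃ h ∈ H, Set.InjOn h S := by
  obtain ⟨H, hHcard, hH⟩ := exists_finset_injOn_of_card_add_one_pow_lt (α := Fin m)
    (s := 2 * (4 * k)) (by positivity) (by simpa using add_one_pow_lt_two_pow hk hm)
  refine ⟨H, ?_, hH⟩
  calc #(hashSets H) ≤ 2 ^ (2 * (4 * k)) * (16 * k ^ 2 + 1) * 2 ^ (2 * (2 * (4 * k))) := by
        simpa using (card_hashSets_le H).trans (Nat.mul_le_mul_right _ hHcard)
    _ = 2 ^ (8 * k) * (16 * k ^ 2 + 1) * 2 ^ (16 * k) := by ring_nf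
    _ ≤ 2 ^ (8 * k) * 2 ^ (8 * k) * 2 ^ (16 * k) := by
        gcongr; exact sixteen_mul_sq_add_one_le_two_pow k
    _ = 2 ^ (32 * k) := by rw [← pow_add, ← pow_add]; ring_nf

theorem div_add_div_add_one_mul_le {m k : ℕ} (hkm : k ≤ m) :
    (m / (4 * k + 1) + (m / (4 * k) + 1)) * k ≤ m := by
  rcases lt_or_ge m (4 * k) with hm | hm
  · rw [Nat.div_eq_of_lt (by omega), Nat.div_eq_of_lt hm]
    omega
  · have h₁ := Nat.div_mul_le_self m (4 * k + 1)
    have h₂ := Nat.div_mul_le_self m (4 * k)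
    nlinarith

/-- there are universal constants `c, C > 0` such that for every `m ≥ 2`, `n ≥ 1`,
and `C·log₂ m ≤ k ≤ m`, there is a bank `𝒜` of allocations in which at most `2^(c·k)` distinct
sets can ever be received by a bidder, and whose welfare-maximal element is an
`m/k`-approximation to the optimal welfare, for all monotone nonnegative valuations. -/
theorem general_mechanism_exists :
    ∃ c C : ℝ, 0 < c ∧ 0 < C ∧
      ∀ m n k : ℕ, 2 ≤ m → 1 ≤ n → C * Real.logb 2 m ≤ (k : ℝ) → k ≤ m →
        ∃ 𝒜 : Set (Fin n → Finset (Fin m)),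
          (∀ A ∈ 𝒜, ∀ i j : Fin n, i ≠ j → Disjoint (A i) (A j)) ∧
          ((({S : Finset (Fin m) | ∃ A ∈ 𝒜, ∃ i : Fin n, A i = S}).ncard : ℝ)
              ≤ (2 : ℝ) ^ (c * (k : ℝ))) ∧
          (∀ v : Fin n → Finset (Fin m) → ℝ,
            (∀ i S, 0 ≤ v i S) →
            (∀ i, ∀ S T : Finset (Fin m), S ⊆ T → v i S ≤ v i T) →
            ∀ A' : Fin n → Finset (Fin m),
              (∀ i j : Fin n, i ≠ j → Disjoint (A' i) (A' j)) →
              ∃ A ∈ 𝒜, (k : ℝ) / m * ∑ i, v i (A' i) ≤ ∑ i, v i (A i)) := by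
  refine ⟨32, 1, by norm_num, one_pos, fun m n k hm _ hlog hkm => ?_⟩
  rw [one_mul] at hlog
  have hm2 : m ≤ 2 ^ k := le_two_pow_of_logb_le (by omega) hlog
  have hk : 0 < k := Nat.pos_of_ne_zero fun hk => by simp [hk] at hm2; omega
  obtain ⟨H, hbundles, hH⟩ := exists_hashSets_card_le_of_le_two_pow hk hm2
  refine ⟨{A | Pairwise (Disjoint on A) ∧ ∀ i, A i ∈ hashSets H}, fun A hA => hA.1, ?_, ?_⟩
  · rw [show (32 : ℝ) * k = ((32 * k : ℕ) : ℝ) by push_cast; ring, Real.rpow_natCast]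
    exact_mod_cast (Set.ncard_le_ncard (by rintro _ ⟨A, hA, i, rfl⟩; exact hA.2 i)
      (finite_toSet _)).trans ((Set.ncard_coe_finset _).trans_le hbundles)
  · intro v hv hmono A' hA'
    obtain ⟨𝒞, h𝒞, hmem, hcover, hcard⟩ :=
      exists_cover_by_hashAllocations (b := 4 * k) (by positivity) hH hA'
    obtain ⟨B, hB, hle⟩ := exists_mem_sum_div_card_le v hv (fun i _ _ => hmono i _ _) h𝒞 hcover
    refine ⟨B, hmem B hB, le_trans ?_ hle⟩
    have hk𝒞 : (#𝒞 * k : ℝ) ≤ m := by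
      exact_mod_cast (Nat.mul_le_mul_right k (by simpa using hcard)).trans
        (div_add_div_add_one_mul_le hkm)
    have hW : 0 ≤ ∑ i, v i (A' i) := sum_nonneg fun i _ => hv i _
    rw [div_mul_eq_mul_div, div_le_div_iff₀ (by positivity) (by exact_mod_cast h𝒞.card_pos)]
    nlinarith
end

section
/- There exists a universal constant c > 0 such that for every real C ≥ 1 and all integers m ≥ 2, t ≥ 1 with m ≥ c · t² · ln(m), there exist partitions B⁽¹⁾,…,B⁽ᵐ⁾ : [m] → [t] with the following property: for every partial partition of the items into t buckets, i.e., every function B : [m] → [t] ∪ {⊥}, there exists ℓ ∈ [m] such that for all s, s' ∈ [t], if |B⁻¹(s)| ≤ C·m/t then |(B⁽ˡ⁾)⁻¹(s') ∩ B⁻¹(s)| ≤ 3C·m/t². -/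
/-!
Choose the `m` partitions independently and uniformly at random. By a union bound over the
`(t + 1)^m` partial partitions `Bp`, it suffices that for each `Bp` the partitions `f` that put
`r = ⌊3Cm/t²⌋ + 1` items of one bucket of `f` into one bucket of `Bp` of size at most
`K = ⌊Cm/t⌋` form a fraction less than `1/(t + 1)` of all partitions. A union bound over the
`t²` pairs of buckets and the `C(K, r)` choices of those items bounds this fraction by
`t² C(K, r) / t^r`. Since `C(K, r) ≤ (eK/r)^r ≤ (et/3)^r` and `r ≥ 300 log m`, the factor
`(e/3)^r` beats `(t + 1) t² ≤ m³`.
-/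

open Finset Real

theorem choose_le_exp_one_mul_div_pow (n r : ℕ) :
    (n.choose r : ℝ) ≤ (exp 1 * n / r) ^ r := by
  rcases r.eq_zero_or_pos with rfl | hr
  · simp
  have hr' : (0 : ℝ) < r := by exact_mod_cast hr
  have hfac : (r : ℝ) ^ r ≤ exp 1 ^ r * r.factorial := by
    have := pow_div_factorial_le_exp _ hr'.le r
    rwa [div_le_iff₀ (by positivity), ← exp_one_pow] at this
  calc (n.choose r : ℝ) ≤ n ^ r / r.factorial := Nat.choose_le_pow_div r n
    _ ≤ (exp 1 * n / r) ^ r := by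
      rw [div_pow, mul_pow, div_le_div_iff₀ (by positivity) (by positivity)]
      calc (n : ℝ) ^ r * r ^ r ≤ n ^ r * (exp 1 ^ r * r.factorial) := by gcongr
        _ = _ := by ring

theorem succ_mul_sq_mul_choose_lt_pow {m t K r : ℕ} (hm : 2 ≤ m) (ht : 1 ≤ t) (htm : t + 1 ≤ m)
    (hK : 3 * K ≤ r * t) (hr : 34 * log m ≤ r) :
    (t + 1) * t ^ 2 * K.choose r < t ^ r := by
  have hlogm : 0 < log m := log_pos (by exact_mod_cast hm)
  have hr0 : (0 : ℝ) < r := by linarith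
  have htR : (0 : ℝ) < t := by exact_mod_cast ht
  have hbase : exp 1 * K / r ≤ exp 1 / 3 * t := by
    have : (3 : ℝ) * K ≤ r * t := by exact_mod_cast hK
    rw [div_le_iff₀ hr0]
    nlinarith [exp_pos 1]
  have hdecay : (exp 1 / 3) ^ r ≤ exp (r * (exp 1 / 3 - 1)) := by
    rw [exp_nat_mul]
    exact pow_le_pow_left₀ (by positivity) (by linarith [add_one_le_exp (exp 1 / 3 - 1)]) r
  have hpoly : ((t : ℝ) + 1) * t ^ 2 ≤ exp (3 * log m) := by
    have htmR : (t : ℝ) + 1 ≤ m := by exact_mod_cast htm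
    rw [show (3 : ℝ) * log m = ((3 : ℕ) : ℝ) * log m by norm_num, exp_nat_mul,
      exp_log (by positivity)]
    calc ((t : ℝ) + 1) * t ^ 2 ≤ m * (m : ℝ) ^ 2 := by gcongr; linarith
      _ = (m : ℝ) ^ 3 := by ring
  have hexponent : 3 * log m + r * (exp 1 / 3 - 1) < 0 := by
    nlinarith [exp_one_lt_d9]
  have hreal : ((t : ℝ) + 1) * t ^ 2 * K.choose r < t ^ r :=
    calc ((t : ℝ) + 1) * t ^ 2 * K.choose r ≤ exp (3 * log m) * (exp 1 / 3 * t) ^ r := by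
          gcongr
          exact (choose_le_exp_one_mul_div_pow K r).trans
            (pow_le_pow_left₀ (by positivity) hbase r)
      _ ≤ exp (3 * log m) * exp (r * (exp 1 / 3 - 1)) * t ^ r := by
          rw [mul_pow, ← mul_assoc]; gcongr
      _ < t ^ r := by
          rw [← exp_add]
          exact mul_lt_of_lt_one_left (by positivity) (exp_lt_one_iff.2 hexponent)
  exact_mod_cast hreal

theorem exists_forall_exists_not_of_card_lt {ι α β : Type*} [Fintype ι] [Fintype α] [Fintype β]
    (P : β → α → Prop) [∀ b, DecidablePred (P b)] (M : ℕ) (hM : ∀ b, #{a | P b a} ≤ M)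
    (h : Fintype.card β * M ^ Fintype.card ι < Fintype.card α ^ Fintype.card ι) :
    ∃ f : ι → α, ∀ b, ∃ i, ¬ P b (f i) := by
  classical
  by_contra! hall
  have hcover : (univ : Finset (ι → α)) ⊆
      univ.biUnion fun b => Fintype.piFinset fun _ => {a | P b a} := by
    intro f _
    obtain ⟨b, hb⟩ := hall f
    exact mem_biUnion.2 ⟨b, mem_univ _, Fintype.mem_piFinset.2 fun i => by simpa using hb i⟩
  have hcard := (card_le_card hcover).trans <|
    card_biUnion_le_card_mul _ _ (M ^ Fintype.card ι) fun b _ => by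
      rw [Fintype.card_piFinset, prod_const, card_univ]
      exact Nat.pow_le_pow_left (hM b) _
  rw [card_univ, card_univ, Fintype.card_fun] at hcard
  exact hcard.not_gt h

section Partitions

variable {α β : Type*} [Fintype α] [Fintype β] [DecidableEq β]

theorem card_filter_forall_mem_eq [DecidableEq α] (T : Finset α) (b : β) :
    #{f : α → β | ∀ j ∈ T, f j = b} = Fintype.card β ^ (Fintype.card α - #T) := by
  have hpi : ({f : α → β | ∀ j ∈ T, f j = b} : Finset (α → β)) =
      Fintype.piFinset fun j => if j ∈ T then {b} else univ := by
    ext f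
    simp only [mem_filter, mem_univ, true_and, Fintype.mem_piFinset]
    refine ⟨fun h j => ?_, fun h j hj => by simpa [hj] using h j⟩
    split_ifs with hj <;> simp [h j, hj]
  simp only [hpi, Fintype.card_piFinset, apply_ite card, card_singleton, card_univ]
  rw [prod_ite, prod_const_one, one_mul, prod_const, filter_not, card_sdiff, ← card_univ]
  simp

theorem card_filter_le_card_filter_eq_le [DecidableEq α] (S : Finset α) (b : β) (r : ℕ) :
    #{f : α → β | r ≤ #{j ∈ S | f j = b}} ≤
      (#S).choose r * Fintype.card β ^ (Fintype.card α - r) := by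
  have hsub : ({f : α → β | r ≤ #{j ∈ S | f j = b}} : Finset (α → β)) ⊆
      (S.powersetCard r).biUnion fun T => {f | ∀ j ∈ T, f j = b} := by
    intro f hf
    obtain ⟨T, hTS, hT⟩ := exists_subset_card_eq (mem_filter.1 hf).2
    refine mem_biUnion.2 ⟨T, mem_powersetCard.2 ⟨hTS.trans (filter_subset _ _), hT⟩, ?_⟩
    simp only [mem_filter, mem_univ, true_and]
    exact fun j hj => (mem_filter.1 (hTS hj)).2
  refine (card_le_card hsub).trans ?_
  rw [← card_powersetCard]
  refine card_biUnion_le_card_mul _ _ _ fun T hT => ?_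
  rw [card_filter_forall_mem_eq, (mem_powersetCard.1 hT).2]

def Overloads (K r : ℕ) (Bp : α → Option β) (f : α → β) : Prop :=
  ∃ s s' : β, #{j | Bp j = some s} ≤ K ∧ r ≤ #{j | f j = s' ∧ Bp j = some s}

instance (K r : ℕ) (Bp : α → Option β) : DecidablePred (Overloads K r Bp) :=
  fun _ => inferInstanceAs (Decidable (∃ _ _, _))

theorem card_overloads_le [DecidableEq α] (K r : ℕ) (Bp : α → Option β) :
    #{f : α → β | Overloads K r Bp f} ≤
      Fintype.card β * Fintype.card β * (K.choose r * Fintype.card β ^ (Fintype.card α - r)) := by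
  have hsub : ({f : α → β | Overloads K r Bp f} : Finset (α → β)) ⊆
      (univ : Finset (β × β)).biUnion fun p =>
        {f | #{j | Bp j = some p.1} ≤ K ∧ r ≤ #{j | f j = p.2 ∧ Bp j = some p.1}} := by
    intro f hf
    obtain ⟨s, s', hf⟩ := (mem_filter.1 hf).2
    exact mem_biUnion.2 ⟨(s, s'), mem_univ _, mem_filter.2 ⟨mem_univ _, hf⟩⟩
  refine (card_le_card hsub).trans ?_
  rw [← Fintype.card_prod, ← card_univ]
  refine card_biUnion_le_card_mul _ _ _ fun ⟨s, s'⟩ _ => ?_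
  by_cases hs : #{j | Bp j = some s} ≤ K
  · have hfib (f : α → β) :
        #{j | f j = s' ∧ Bp j = some s} = #{j ∈ {j | Bp j = some s} | f j = s'} := by
      simp only [filter_filter, and_comm]
    simp only [hs, true_and, hfib]
    exact (card_filter_le_card_filter_eq_le _ s' r).trans
      (Nat.mul_le_mul_right _ (Nat.choose_le_choose r hs))
  · simp [hs]

theorem exists_forall_exists_not_overloads [Nonempty α] [Nonempty β] {K r : ℕ}
    (hr : r ≤ Fintype.card α)
    (h : (Fintype.card β + 1) * Fintype.card β ^ 2 * K.choose r < Fintype.card β ^ r) :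
    ∃ B : α → α → β, ∀ Bp : α → Option β, ∃ ℓ, ¬ Overloads K r Bp (B ℓ) := by
  classical
  refine exists_forall_exists_not_of_card_lt _ _ (card_overloads_le K r) ?_
  rw [Fintype.card_fun, Fintype.card_fun, Fintype.card_option, ← mul_pow]
  set n := Fintype.card α
  set q := Fintype.card β
  have hround : (q + 1) * (q * q * (K.choose r * q ^ (n - r))) < q ^ n :=
    calc _ = (q + 1) * q ^ 2 * K.choose r * q ^ (n - r) := by ring
      _ < q ^ r * q ^ (n - r) := Nat.mul_lt_mul_of_pos_right h (by positivity)
      _ = q ^ n := by rw [← pow_add, Nat.add_sub_cancel' hr]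
  exact Nat.pow_lt_pow_left hround Fintype.card_ne_zero

end Partitions

theorem three_mul_floor_div_le {a : ℝ} (ha : 0 ≤ a) {t : ℕ} (ht : 0 < t) :
    3 * ⌊a / t⌋₊ ≤ (⌊3 * a / t ^ 2⌋₊ + 1) * t := by
  have htR : (0 : ℝ) < t := by exact_mod_cast ht
  have hlt : (3 * ⌊a / t⌋₊ : ℝ) < (⌊3 * a / t ^ 2⌋₊ + 1) * t :=
    calc (3 * ⌊a / t⌋₊ : ℝ) ≤ 3 * (a / t) := by gcongr; exact Nat.floor_le (by positivity)
      _ = 3 * a / t ^ 2 * t := by field_simp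
      _ < (⌊3 * a / t ^ 2⌋₊ + 1) * t := by gcongr; exact Nat.lt_floor_add_one _
  exact_mod_cast hlt.le

theorem lt_of_mul_sq_mul_log_le {c : ℝ} {m t : ℕ} (hc : 2 ≤ c) (hm : 2 ≤ m)
    (h : c * t ^ 2 * log m ≤ m) : t < m := by
  have hm2 : (2 : ℝ) ≤ m := by exact_mod_cast hm
  have hclog : (1.38 : ℝ) ≤ c * log m := by
    nlinarith [log_two_gt_d9, log_le_log (by norm_num) hm2]
  have ht2 : (t : ℝ) ≤ t ^ 2 := by exact_mod_cast Nat.le_self_pow two_ne_zero t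
  have : (1.38 : ℝ) * t ^ 2 ≤ m := by nlinarith [sq_nonneg (t : ℝ)]
  exact_mod_cast (by linarith : (t : ℝ) < m)

theorem mul_log_le_div_sq {c C : ℝ} {m t : ℕ} (hC : 1 ≤ C) (ht : 0 < t)
    (h : c * t ^ 2 * log m ≤ m) : c * log m ≤ C * m / t ^ 2 := by
  rw [le_div_iff₀ (by positivity)]
  nlinarith [(Nat.cast_nonneg m : (0 : ℝ) ≤ m)]

/-- existence of a regular list of `m` partitions of `[m]` into `t` buckets:
for every partial partition `Bp : [m] → [t] ∪ {⊥}`, some partition `B⁽ˡ⁾` from the list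
satisfies that each bucket of `Bp` of size at most `C·m/t` meets each bucket of `B⁽ˡ⁾`
in at most `3C·m/t²` items. -/
theorem exists_regular_partitions :
    ∃ c : ℝ, 0 < c ∧
      ∀ (C : ℝ), 1 ≤ C → ∀ m t : ℕ, 2 ≤ m → 1 ≤ t →
        c * (t : ℝ) ^ 2 * Real.log m ≤ (m : ℝ) →
        ∃ B : Fin m → Fin m → Fin t,
          ∀ Bp : Fin m → Option (Fin t),
            ∃ ℓ : Fin m, ∀ s s' : Fin t,
              ((Finset.univ.filter fun j => Bp j = some s).card : ℝ) ≤ C * m / t →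
              ((Finset.univ.filter fun j => B ℓ j = s' ∧ Bp j = some s).card : ℝ)
                ≤ 3 * C * m / (t : ℝ) ^ 2 := by
  refine ⟨100, by norm_num, fun C hC m t hm ht hmt => ?_⟩
  have : Nonempty (Fin m) := ⟨⟨0, by omega⟩⟩
  have : Nonempty (Fin t) := ⟨⟨0, by omega⟩⟩
  set x : ℝ := 3 * C * m / t ^ 2 with hx
  have hx0 : 0 ≤ x := by positivity
  by_cases hxm : (m : ℝ) ≤ x
  · refine ⟨fun _ _ => Classical.arbitrary _, fun Bp => ⟨Classical.arbitrary _, fun s s' _ => ?_⟩⟩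
    exact le_trans (by exact_mod_cast (card_filter_le _ _).trans (card_fin m).le) hxm
  have hrm : ⌊x⌋₊ + 1 ≤ m := (Nat.floor_lt hx0).2 (not_le.1 hxm)
  have hK : 3 * ⌊C * m / t⌋₊ ≤ (⌊x⌋₊ + 1) * t := by
    simpa [hx, mul_assoc] using three_mul_floor_div_le (by positivity : 0 ≤ C * m) ht
  have hr : 34 * log m ≤ (⌊x⌋₊ + 1 : ℕ) := by
    have := mul_log_le_div_sq (C := 3 * C) (by linarith) ht hmt
    push_cast
    linarith [Nat.lt_floor_add_one x, log_natCast_nonneg m]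
  obtain ⟨B, hB⟩ := exists_forall_exists_not_overloads (α := Fin m) (β := Fin t)
    (K := ⌊C * m / t⌋₊) (r := ⌊x⌋₊ + 1) (by rwa [Fintype.card_fin]) (by
      simpa using succ_mul_sq_mul_choose_lt_pow hm ht (lt_of_mul_sq_mul_log_le (by norm_num) hm hmt)
        hK hr)
  refine ⟨B, fun Bp => ⟨(hB Bp).choose, fun s s' hs => ?_⟩⟩
  have hlt : #{j | B (hB Bp).choose j = s' ∧ Bp j = some s} < ⌊x⌋₊ + 1 :=
    not_le.1 fun h => (hB Bp).choose_spec ⟨s, s', Nat.le_floor hs, h⟩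
  exact (Nat.cast_le.2 (Nat.lt_succ_iff.1 hlt)).trans (Nat.floor_le hx0)
end

section
/- Let s ≥ 1 and t ≥ 2 be integers, for each j ∈ [s] let T_j ⊆ [t] be a set of exactly two bidders, and let 𝒜 be a set of functions A : [s] → [t] with A(j) ∈ T_j for all j. Suppose 0 < ε ≤ 1/2 and |𝒜| ≥ 2^{(1−ε)s}. Then there exist V ⊆ [t] with |V| ≥ 2 and E ⊆ [s] with T_j ⊆ V for all j ∈ E such that, for every partition of V into r ≥ 2 nonempty parts, letting C := {j ∈ E : the two elements of T_j lie in different parts of the partition}, the following hold: (i) |C| ≥ ε(r−1)s/t; and (ii) for every function g : C → [t] with g(j) ∈ T_j for all j ∈ C, the number of functions in 𝒜|_E (the set of restrictions to E of members of 𝒜) that agree with g on C is at most 2^{−(1−2ε)|C|} · |𝒜|_E|. -/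
/-!
Write `𝒜|_E` for the restrictions of `𝒜` to a set `E` of items, `V(E)` for the bidders they
touch, and call `E` rich if `|𝒜|_E| ≥ 2 ^ Φ(E)` for the potential
`Φ(E) = (1 - 2ε)|E| + c(|V(E)| - 1)` with `c = εs/(t - 1)`. The size assumption makes the set of
all items rich; take a minimal nonempty rich `E`. If fixing the crossing items `C` of a partition
left more than a `2^{-(1-2ε)|C|}` fraction of `𝒜|_E`, then `E \ C` would be a smaller nonempty
rich set. For the crossing bound, split the non-crossing items by the part containing their
bidders; none of these pieces is rich, and `|𝒜|_E| ≤ 2^{|C|} ∏ᵢ |𝒜|_{Eᵢ}|` compares the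
potentials to give `c(r - 1) ≤ 2ε|C|`.
-/

open Finset

namespace GoodSubgraph

variable {ι β κ : Type*}

section Restriction

variable (𝒜 : Set (ι → β))

theorem image_restrict₂_image_restrict {E F : Finset ι} (h : F ⊆ E) :
    restrict₂ h '' (E.restrict '' 𝒜) = F.restrict '' 𝒜 := by
  rw [Set.image_image]
  rfl

theorem ncard_image_restrict_univ [Fintype ι] :
    ((univ : Finset ι).restrict '' 𝒜).ncard = 𝒜.ncard :=
  Set.ncard_image_of_injective 𝒜 fun _ _ h => funext fun j => congrFun h ⟨j, mem_univ j⟩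

theorem ncard_image_restrict_empty_le_one [Finite β] : ((∅ : Finset ι).restrict '' 𝒜).ncard ≤ 1 :=
  (Set.ncard_le_one (Set.toFinite _)).2 fun _ _ _ _ => Subsingleton.elim _ _

theorem ncard_image_restrict_union_le [DecidableEq ι] [Finite β] (E F : Finset ι) :
    ((E ∪ F).restrict '' 𝒜).ncard ≤ (E.restrict '' 𝒜).ncard * (F.restrict '' 𝒜).ncard := by
  rw [← Set.ncard_prod]
  refine Set.ncard_le_ncard_of_injOn
    (fun B => (restrict₂ (π := fun _ => β) subset_union_left B,
      restrict₂ (π := fun _ => β) subset_union_right B)) ?_ ?_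
  · rintro _ ⟨A, hA, rfl⟩
    exact ⟨⟨A, hA, rfl⟩, ⟨A, hA, rfl⟩⟩
  · intro B₁ _ B₂ _ h
    obtain ⟨hE, hF⟩ := Prod.ext_iff.1 h
    funext ⟨j, hj⟩
    rcases mem_union.1 hj with hj | hj
    · exact congrFun hE ⟨j, hj⟩
    · exact congrFun hF ⟨j, hj⟩

theorem ncard_image_restrict_biUnion_le [DecidableEq ι] [Finite β] [DecidableEq κ] (s : Finset κ)
    (F : κ → Finset ι) :
    ((s.biUnion F).restrict '' 𝒜).ncard ≤ ∏ i ∈ s, ((F i).restrict '' 𝒜).ncard := by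
  induction s using Finset.induction_on with
  | empty => simpa using ncard_image_restrict_empty_le_one 𝒜
  | insert i s hi ih =>
    rw [biUnion_insert, prod_insert hi]
    exact (ncard_image_restrict_union_le 𝒜 _ _).trans (Nat.mul_le_mul_left _ ih)

theorem ncard_image_restrict_le_two_pow {T : ι → Finset β} (hT : ∀ j, (T j).card = 2)
    (h𝒜 : ∀ A ∈ 𝒜, ∀ j, A j ∈ T j) (E : Finset ι) :
    (E.restrict '' 𝒜).ncard ≤ 2 ^ E.card := by
  classical
  calc (E.restrict '' 𝒜).ncard ≤ (Fintype.piFinset fun j : E => T j).card := by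
        rw [← Set.ncard_coe_finset]
        refine Set.ncard_le_ncard ?_
        rintro _ ⟨A, hA, rfl⟩
        simp [h𝒜 A hA]
    _ = 2 ^ E.card := by simp [Fintype.card_piFinset, hT]

theorem ncard_fiber_le [DecidableEq ι] [Finite β] (E C : Finset ι) (g : ι → β) :
    {B ∈ E.restrict '' 𝒜 | ∀ x : E, x.1 ∈ C → B x = g x}.ncard
      ≤ ((E \ C).restrict '' 𝒜).ncard := by
  rw [← image_restrict₂_image_restrict 𝒜 sdiff_subset]
  refine Set.ncard_le_ncard_of_injOn (restrict₂ (π := fun _ => β) sdiff_subset)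
    (fun B hB => Set.mem_image_of_mem _ hB.1) ?_
  rintro B₁ ⟨-, h₁⟩ B₂ ⟨-, h₂⟩ h
  funext ⟨j, hj⟩
  by_cases hjC : j ∈ C
  · rw [h₁ ⟨j, hj⟩ hjC, h₂ ⟨j, hj⟩ hjC]
  · exact congrFun h ⟨j, mem_sdiff.2 ⟨hj, hjC⟩⟩

end Restriction

section Graph

variable (T : ι → Finset β) (𝒜 : Set (ι → β)) (ε c : ℝ)

def crossing [DecidableEq κ] (P : β → κ) (E : Finset ι) : Finset ι :=
  E.filter fun j => ∃ a ∈ T j, ∃ b ∈ T j, P a ≠ P b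

def insidePart [DecidableEq ι] [DecidableEq κ] (P : β → κ) (e : ι → β) (E : Finset ι) (i : κ) :
    Finset ι :=
  {j ∈ E \ crossing T P E | P (e j) = i}

def potential [DecidableEq β] (E : Finset ι) : ℝ :=
  (1 - 2 * ε) * E.card + c * ((E.biUnion T).card - 1 : ℝ)

def IsRich [DecidableEq β] (E : Finset ι) : Prop :=
  (2 : ℝ) ^ potential T ε c E ≤ (E.restrict '' 𝒜).ncard

variable {T 𝒜 ε c}

theorem crossing_subset [DecidableEq κ] (P : β → κ) (E : Finset ι) : crossing T P E ⊆ E :=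
  filter_subset _ _

theorem apply_eq_of_notMem_crossing [DecidableEq κ] {P : β → κ} {E : Finset ι} {j : ι}
    (hjE : j ∈ E) (hj : j ∉ crossing T P E) {a b : β} (ha : a ∈ T j) (hb : b ∈ T j) :
    P a = P b := by
  by_contra hab
  exact hj (mem_filter.2 ⟨hjE, a, ha, b, hb, hab⟩)

theorem two_le_card_biUnion [DecidableEq β] (hT : ∀ j, (T j).card = 2) {E : Finset ι}
    (hE : E.Nonempty) : 2 ≤ (E.biUnion T).card :=
  let ⟨j, hj⟩ := hE
  (hT j).symm.le.trans (card_le_card (subset_biUnion_of_mem T hj))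

theorem isRich_univ [DecidableEq β] [Fintype ι] [Fintype β] (hε : 0 ≤ ε)
    (hβ : 1 < Fintype.card β) (h𝒜 : (2 : ℝ) ^ ((1 - ε) * Fintype.card ι) ≤ 𝒜.ncard) :
    IsRich T 𝒜 ε (ε * Fintype.card ι / (Fintype.card β - 1)) univ := by
  have hβ' : (0 : ℝ) < Fintype.card β - 1 := by
    rw [sub_pos]
    exact_mod_cast hβ
  have hV : ((univ.biUnion T).card : ℝ) ≤ Fintype.card β := by exact_mod_cast card_le_univ _
  have hc : ε * Fintype.card ι / (Fintype.card β - 1) * ((univ.biUnion T).card - 1 : ℝ)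
      ≤ ε * Fintype.card ι := by
    rw [div_mul_eq_mul_div, div_le_iff₀ hβ']
    exact mul_le_mul_of_nonneg_left (by linarith) (by positivity)
  have hpot : potential T ε (ε * Fintype.card ι / (Fintype.card β - 1)) univ
      ≤ (1 - ε) * Fintype.card ι := by
    simp only [potential, card_univ]
    linarith
  rw [IsRich, ncard_image_restrict_univ]
  exact (Real.rpow_le_rpow_of_exponent_le one_le_two hpot).trans h𝒜

theorem potential_sdiff_le [DecidableEq ι] [DecidableEq β] (hc : 0 ≤ c) {C E : Finset ι}
    (hCE : C ⊆ E) :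
    potential T ε c (E \ C) ≤ potential T ε c E - (1 - 2 * ε) * C.card := by
  have hV : ((E \ C).biUnion T).card ≤ (E.biUnion T).card :=
    card_le_card (biUnion_subset_biUnion_of_subset_left T sdiff_subset)
  simp only [potential, card_sdiff_of_subset hCE, Nat.cast_sub (card_le_card hCE)]
  have := mul_le_mul_of_nonneg_left (sub_le_sub_right (Nat.cast_le (α := ℝ).2 hV) 1) hc
  linarith

theorem ncard_fiber_le_of_minimal [DecidableEq ι] [DecidableEq β] [Finite β] (hc : 0 ≤ c)
    (hTne : ∀ j, (T j).Nonempty) {E : Finset ι}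
    (hE : Minimal (fun F => F.Nonempty ∧ IsRich T 𝒜 ε c F) E)
    {C : Finset ι} (hCE : C ⊆ E) (g : ι → β) :
    ({B ∈ E.restrict '' 𝒜 | ∀ x : E, x.1 ∈ C → B x = g x}.ncard : ℝ)
      ≤ 2 ^ (-(1 - 2 * ε) * C.card) * (E.restrict '' 𝒜).ncard := by
  by_contra! hlt
  have hC : C.Nonempty := by
    rw [nonempty_iff_ne_empty]
    rintro rfl
    have : {B ∈ E.restrict '' 𝒜 | ∀ x : E, x.1 ∈ (∅ : Finset ι) → B x = g x}.ncard
        ≤ (E.restrict '' 𝒜).ncard := Set.ncard_le_ncard (Set.sep_subset _ _)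
    simp only [card_empty, CharP.cast_eq_zero, mul_zero, Real.rpow_zero, one_mul] at hlt
    exact hlt.not_ge (by exact_mod_cast this)
  have hrich : (2 : ℝ) ^ (potential T ε c E - (1 - 2 * ε) * C.card)
      < ((E \ C).restrict '' 𝒜).ncard :=
    calc (2 : ℝ) ^ (potential T ε c E - (1 - 2 * ε) * C.card)
        = 2 ^ (-(1 - 2 * ε) * C.card) * 2 ^ potential T ε c E := by
          rw [← Real.rpow_add two_pos]
          ring_nf
      _ ≤ 2 ^ (-(1 - 2 * ε) * C.card) * (E.restrict '' 𝒜).ncard := by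
          gcongr
          exact hE.prop.2
      _ < _ := hlt
      _ ≤ _ := by exact_mod_cast ncard_fiber_le 𝒜 E C g
  have hne : (E \ C).Nonempty := by
    rw [nonempty_iff_ne_empty]
    intro h
    obtain rfl : E = C := (sdiff_eq_empty_iff_subset.1 h).antisymm hCE
    have hV : (1 : ℝ) ≤ (E.biUnion T).card := by
      exact_mod_cast card_pos.2 (biUnion_nonempty.2 (hE.prop.1.imp fun j hj => ⟨hj, hTne j⟩))
    have h1 : (1 : ℝ) ≤ 2 ^ (potential T ε c E - (1 - 2 * ε) * E.card) := by
      refine Real.one_le_rpow one_le_two ?_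
      simp only [potential, add_sub_cancel_left]
      exact mul_nonneg hc (sub_nonneg.2 hV)
    rw [h] at hrich
    exact (h1.trans_lt hrich).not_ge (by exact_mod_cast ncard_image_restrict_empty_le_one 𝒜)
  exact hE.not_prop_of_lt (sdiff_ssubset hCE hC) ⟨hne, (Real.rpow_le_rpow_of_exponent_le
    one_le_two (potential_sdiff_le hc hCE)).trans hrich.le⟩

theorem ncard_image_restrict_le_of_not_isRich [DecidableEq β] [Finite β] (hc : 0 ≤ c)
    {F : Finset ι} (hF : F.Nonempty → ¬IsRich T 𝒜 ε c F) {u : ℕ} (hu : 1 ≤ u)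
    (hFu : (F.biUnion T).card ≤ u) :
    ((F.restrict '' 𝒜).ncard : ℝ) ≤ 2 ^ ((1 - 2 * ε) * F.card + c * (u - 1 : ℝ)) := by
  have hcu : 0 ≤ c * (u - 1 : ℝ) := mul_nonneg hc (by simpa using hu)
  rcases F.eq_empty_or_nonempty with rfl | hne
  · calc ((∅ : Finset ι).restrict '' 𝒜).ncard ≤ (1 : ℝ) := by
          exact_mod_cast ncard_image_restrict_empty_le_one 𝒜
      _ ≤ _ := Real.one_le_rpow one_le_two (by simpa using hcu)
  · refine (not_le.1 (hF hne)).le.trans (Real.rpow_le_rpow_of_exponent_le one_le_two ?_)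
    have : ((F.biUnion T).card : ℝ) ≤ u := by exact_mod_cast hFu
    simp only [potential]
    gcongr

section Crossing

variable [DecidableEq ι] [DecidableEq κ] {P : β → κ} {E : Finset ι}

theorem biUnion_insidePart_subset [DecidableEq β] {e : ι → β} (he : ∀ j, e j ∈ T j) (i : κ) :
    (insidePart T P e E i).biUnion T ⊆ {x ∈ E.biUnion T | P x = i} := by
  intro x hx
  obtain ⟨j, hj, hxj⟩ := mem_biUnion.1 hx
  obtain ⟨hjEC, rfl⟩ := mem_filter.1 hj
  obtain ⟨hjE, hjC⟩ := mem_sdiff.1 hjEC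
  exact mem_filter.2 ⟨mem_biUnion.2 ⟨j, hjE, hxj⟩,
    apply_eq_of_notMem_crossing hjE hjC hxj (he j)⟩

theorem insidePart_ssubset [DecidableEq β] [Nontrivial κ] {e : ι → β} (he : ∀ j, e j ∈ T j)
    (hP : ∀ i, ∃ x ∈ E.biUnion T, P x = i) (i : κ) : insidePart T P e E i ⊂ E := by
  refine (ssubset_iff_of_subset ((filter_subset _ _).trans sdiff_subset)).2 ?_
  obtain ⟨i', hi'⟩ := exists_ne i
  obtain ⟨x, hx, rfl⟩ := hP i'
  obtain ⟨j, hjE, hxj⟩ := mem_biUnion.1 hx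
  refine ⟨j, hjE, fun hj => hi' ?_⟩
  exact (mem_filter.1 (biUnion_insidePart_subset he i
    (mem_biUnion.2 ⟨j, hj, hxj⟩))).2

theorem biUnion_insidePart [Fintype κ] (e : ι → β) :
    univ.biUnion (insidePart T P e E) = E \ crossing T P E :=
  biUnion_filter_eq_of_maps_to fun _ _ => mem_univ _

theorem sum_card_insidePart [Fintype κ] (e : ι → β) :
    ∑ i, (insidePart T P e E i).card = (E \ crossing T P E).card :=
  (card_eq_sum_card_fiberwise fun _ _ => mem_univ _).symm

theorem ncard_image_restrict_le_two_pow_mul_prod [Finite β] [Fintype κ]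
    (hT : ∀ j, (T j).card = 2) (h𝒜 : ∀ A ∈ 𝒜, ∀ j, A j ∈ T j) (e : ι → β) :
    (E.restrict '' 𝒜).ncard ≤ 2 ^ (crossing T P E).card
      * ∏ i, ((insidePart T P e E i).restrict '' 𝒜).ncard := by
  have hE : E = crossing T P E ∪ univ.biUnion (insidePart T P e E) := by
    rw [biUnion_insidePart, union_sdiff_of_subset (crossing_subset P E)]
  calc (E.restrict '' 𝒜).ncard
      ≤ ((crossing T P E).restrict '' 𝒜).ncard
        * ((univ.biUnion (insidePart T P e E)).restrict '' 𝒜).ncard := by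
        conv_lhs => rw [hE]
        exact ncard_image_restrict_union_le 𝒜 _ _
    _ ≤ _ := Nat.mul_le_mul (ncard_image_restrict_le_two_pow 𝒜 hT h𝒜 _)
        (ncard_image_restrict_biUnion_le 𝒜 _ _)

theorem mul_card_sub_one_le_two_mul_card_crossing [DecidableEq β] [Finite β] [Fintype κ]
    (hT : ∀ j, (T j).card = 2) (h𝒜 : ∀ A ∈ 𝒜, ∀ j, A j ∈ T j) (hc : 0 ≤ c)
    (hE : IsRich T 𝒜 ε c E) (hP : ∀ i, ∃ x ∈ E.biUnion T, P x = i)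
    {e : ι → β} (he : ∀ j, e j ∈ T j)
    (hpoor : ∀ i, (insidePart T P e E i).Nonempty → ¬IsRich T 𝒜 ε c (insidePart T P e E i)) :
    c * (Fintype.card κ - 1 : ℝ) ≤ 2 * ε * (crossing T P E).card := by
  set C := crossing T P E
  set u : κ → ℕ := fun i => {x ∈ E.biUnion T | P x = i}.card
  have hu : ∀ i, 1 ≤ u i := fun i =>
    let ⟨x, hx, hPx⟩ := hP i
    card_pos.2 ⟨x, mem_filter.2 ⟨hx, hPx⟩⟩
  have hsum_u : ∑ i, u i = (E.biUnion T).card :=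
    (card_eq_sum_card_fiberwise fun _ _ => mem_univ _).symm
  have hsum_part : ∑ i, ((insidePart T P e E i).card : ℝ) = E.card - C.card := by
    rw [← Nat.cast_sum, sum_card_insidePart,
      card_sdiff_of_subset (crossing_subset P E), Nat.cast_sub (card_le_card (crossing_subset P E))]
  set x : κ → ℝ := fun i => (1 - 2 * ε) * (insidePart T P e E i).card + c * (u i - 1 : ℝ)
  have hexp : potential T ε c E ≤ C.card + ∑ i, x i := by
    rw [← Real.rpow_le_rpow_left_iff one_lt_two, Real.rpow_add two_pos, Real.rpow_natCast,
      Real.rpow_sum_of_pos two_pos]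
    calc (2 : ℝ) ^ potential T ε c E ≤ (E.restrict '' 𝒜).ncard := hE
      _ ≤ 2 ^ C.card * ∏ i, ((insidePart T P e E i).restrict '' 𝒜).ncard := by
          exact_mod_cast ncard_image_restrict_le_two_pow_mul_prod hT h𝒜 e
      _ ≤ 2 ^ C.card * ∏ i, 2 ^ x i := by
          push_cast
          refine mul_le_mul_of_nonneg_left (prod_le_prod (fun _ _ => by positivity) fun i _ => ?_)
            (by positivity)
          exact ncard_image_restrict_le_of_not_isRich hc (hpoor i) (hu i)
            (card_le_card (biUnion_insidePart_subset he i))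
  have hsum_x : ∑ i, x i = (1 - 2 * ε) * (E.card - C.card : ℝ)
      + c * ((E.biUnion T).card - Fintype.card κ : ℝ) := by
    simp only [x, sum_add_distrib, ← mul_sum, sum_sub_distrib, hsum_part, ← Nat.cast_sum, hsum_u]
    simp
  simp only [potential] at hexp
  linarith

end Crossing

theorem mul_card_sub_one_le_of_minimal [DecidableEq ι] [DecidableEq β] [Finite β]
    [Fintype κ] [DecidableEq κ] [Nontrivial κ] (hT : ∀ j, (T j).card = 2)
    (h𝒜 : ∀ A ∈ 𝒜, ∀ j, A j ∈ T j) (hc : 0 ≤ c) {E : Finset ι}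
    (hE : Minimal (fun F => F.Nonempty ∧ IsRich T 𝒜 ε c F) E) {P : β → κ}
    (hP : ∀ i, ∃ x ∈ E.biUnion T, P x = i) :
    c * (Fintype.card κ - 1 : ℝ) ≤ 2 * ε * (crossing T P E).card := by
  choose e he using fun j => card_pos.1 (by rw [hT j]; exact two_pos : 0 < (T j).card)
  exact mul_card_sub_one_le_two_mul_card_crossing hT h𝒜 hc hE.prop.2 hP he fun i hne hrich =>
    hE.not_prop_of_lt (insidePart_ssubset he hP i) ⟨hne, hrich⟩

end Graph

end GoodSubgraph

open GoodSubgraph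

/-- finding a good subgraph: if `𝒜` is a large family of allocations consistent
with the pairs `T_j`, then there are bidders `V` and items/edges `E` (with both endpoints in `V`)
such that every partition of `V` into `r ≥ 2` nonempty parts has many crossing edges `C`, and
fixing the allocation of the items of `C` keeps at most a `2^(-(1-2ε)|C|)` fraction of the
restrictions `𝒜|_E`. -/
theorem exists_good_subgraph
    (s t : ℕ) (hs : 1 ≤ s) (ht : 2 ≤ t)
    (T : Fin s → Finset (Fin t)) (hT : ∀ j, (T j).card = 2)
    (𝒜 : Set (Fin s → Fin t)) (h𝒜 : ∀ A ∈ 𝒜, ∀ j, A j ∈ T j)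
    (ε : ℝ) (hε0 : 0 < ε) (hε : ε ≤ 1 / 2)
    (hcard : (2 : ℝ) ^ ((1 - ε) * (s : ℝ)) ≤ (𝒜.ncard : ℝ)) :
    ∃ (V : Finset (Fin t)) (E : Finset (Fin s)),
      2 ≤ V.card ∧ (∀ j ∈ E, T j ⊆ V) ∧
      ∀ (r : ℕ), 2 ≤ r → ∀ P : Fin t → Fin r,
        (∀ p : Fin r, ∃ i ∈ V, P i = p) →
        let C : Finset (Fin s) := E.filter fun j => ∃ a ∈ T j, ∃ b ∈ T j, P a ≠ P b
        let 𝒜E : Set ({x : Fin s // x ∈ E} → Fin t) :=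
          (fun (A : Fin s → Fin t) (x : {x : Fin s // x ∈ E}) => A x.1) '' 𝒜
        (ε * ((r : ℝ) - 1) * s / t ≤ (C.card : ℝ)) ∧
        ∀ g : Fin s → Fin t, (∀ j ∈ C, g j ∈ T j) →
          (({B ∈ 𝒜E | ∀ x : {x : Fin s // x ∈ E}, x.1 ∈ C → B x = g x.1}.ncard : ℝ)
            ≤ (2 : ℝ) ^ (-(1 - 2 * ε) * (C.card : ℝ)) * (𝒜E.ncard : ℝ)) := by
  have ht' : (1 : ℝ) < t := by exact_mod_cast ht
  set c : ℝ := ε * s / (t - 1) with hc_def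
  have hc : 0 ≤ c := div_nonneg (by positivity) (by linarith)
  have hTne : ∀ j, (T j).Nonempty := fun j => card_pos.1 (by rw [hT j]; exact two_pos)
  have hrich : IsRich T 𝒜 ε c univ := by
    simpa using isRich_univ (T := T) hε0.le (by simp; omega) (by simpa using hcard)
  have : Nonempty (Fin s) := ⟨⟨0, hs⟩⟩
  obtain ⟨E, hE⟩ := exists_minimal_of_wellFoundedLT (fun F => F.Nonempty ∧ IsRich T 𝒜 ε c F)
    ⟨univ, univ_nonempty, hrich⟩
  refine ⟨E.biUnion T, E, two_le_card_biUnion hT hE.prop.1, fun j hj => subset_biUnion_of_mem T hj,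
    fun r hr P hP => ?_⟩
  -- the statement decides the crossing predicate through `Nat.decidableExistsFin`
  have hC : (E.filter fun j => ∃ a ∈ T j, ∃ b ∈ T j, P a ≠ P b) = crossing T P E := by
    unfold crossing
    congr!
  simp only [hC]
  refine ⟨?_, fun g _ => ncard_fiber_le_of_minimal hc hTne hE (crossing_subset P E) g⟩
  have : Nontrivial (Fin r) := Fin.nontrivial_iff_two_le.2 hr
  have hcross := mul_card_sub_one_le_of_minimal hT h𝒜 hc hE hP
  rw [Fintype.card_fin] at hcross
  have hr' : (1 : ℝ) ≤ r := by exact_mod_cast (one_le_two.trans hr)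
  calc ε * ((r : ℝ) - 1) * s / t ≤ ε * ((r : ℝ) - 1) * s / (t - 1) :=
        div_le_div_of_nonneg_left (by positivity) (by linarith) (by linarith)
    _ = c * (r - 1) := by rw [hc_def]; ring
    _ ≤ 2 * ε * (crossing T P E).card := hcross
    _ ≤ (crossing T P E).card := by nlinarith
end

section
/- Let s, t ≥ 2 be integers, for each j ∈ [s] let T_j ⊆ [t] have exactly two elements, let V ⊆ [t] and E ⊆ [s] with T_j ⊆ V for all j ∈ E, and let 𝒜' be a nonempty finite set of functions B : E → [t] with B(j) ∈ T_j for all j ∈ E. Assume that for every nonempty proper subset W ⊊ V, letting C_W := {j ∈ E : T_j has one element in W and one in V∖W}, and for every g : C_W → [t] with g(j) ∈ T_j, the number of B ∈ 𝒜' with B|_{C_W} = g is at most 2^{−(24/25)|C_W|} · |𝒜'|. Let r ≥ 2, let f : V → [r] be surjective, and let C := {j ∈ E : f maps the two elements of T_j to different values}. Then the number of r-tuples (B⁽¹⁾,…,B⁽ʳ⁾) ∈ (𝒜')^r for which the sets {x ∈ E : B^{(f(i))}(x) = i}, for i ∈ V, are pairwise disjoint is at most 2^{−|C|/3} · |𝒜'|^r.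 -/
open Finset

section Aux

variable {s t r : ℕ}

/-- The set of edges crossing the cut `W`. -/
def cutF (T : Fin s → Finset (Fin t)) (E : Finset (Fin s)) (W : Finset (Fin t)) :
    Finset (Fin s) :=
  E.filter fun j => (∃ a ∈ T j, a ∈ W) ∧ (∃ b ∈ T j, b ∉ W)

/-- The part of the vertex set mapped to `p` by `f`. -/
def WpF (V : Finset (Fin t)) (f : Fin t → Fin r) (p : Fin r) : Finset (Fin t) :=
  V.filter fun i => f i = p

/-- From a pattern `φ` assigning to each edge the pair of choices of the two relevant
bidders, extract the prescribed allocation function for coordinate `p`. -/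
def gOf (f : Fin t → Fin r) (aa bb : Fin s → Fin t) (φ : Fin s → Fin t × Fin t)
    (p : Fin r) : Fin s → Fin t :=
  fun j => if f (aa j) = p then (φ j).1 else (φ j).2

/-- Allocations in `A` agreeing with `g` on `D`. -/
def SpF {E : Finset (Fin s)} (A : Finset ({x : Fin s // x ∈ E} → Fin t))
    (D : Finset (Fin s)) (g : Fin s → Fin t) : Finset ({x : Fin s // x ∈ E} → Fin t) :=
  A.filter fun B => ∀ x : {x : Fin s // x ∈ E}, x.1 ∈ D → B x = g x.1

/-- Allowed patterns on a single edge. -/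
def allowedF (T : Fin s → Finset (Fin t)) (aa bb : Fin s → Fin t) (j : Fin s) :
    Finset (Fin t × Fin t) :=
  (T j ×ˢ T j).erase (aa j, bb j)

end Aux

/-- mixing allocations across a cut is unlikely: if fixing the allocation of the
edges across any 2-way cut of `(V, E)` keeps at most a `2^(-(24/25)|C_W|)` fraction of `𝒜'`,
then for any surjection `f : V → [r]` with induced cut `C`, the fraction of `r`-tuples of
members of `𝒜'` whose selected received-sets are pairwise disjoint is at most `2^(-|C|/3)`. -/
theorem mixing_across_cut_unlikely
    (s t : ℕ) (hs : 2 ≤ s) (ht : 2 ≤ t)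
    (T : Fin s → Finset (Fin t)) (hT : ∀ j, (T j).card = 2)
    (V : Finset (Fin t)) (E : Finset (Fin s)) (hTV : ∀ j ∈ E, T j ⊆ V)
    (𝒜' : Set ({x : Fin s // x ∈ E} → Fin t)) (h𝒜ne : 𝒜'.Nonempty)
    (h𝒜mem : ∀ B ∈ 𝒜', ∀ x : {x : Fin s // x ∈ E}, B x ∈ T x.1)
    (hcut : ∀ W : Finset (Fin t), W.Nonempty → W ⊂ V →
      ∀ g : Fin s → Fin t,
        (∀ j ∈ E.filter (fun j => (∃ a ∈ T j, a ∈ W) ∧ (∃ b ∈ T j, b ∉ W)), g j ∈ T j) →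
        (({B ∈ 𝒜' | ∀ x : {x : Fin s // x ∈ E},
              x.1 ∈ E.filter (fun j => (∃ a ∈ T j, a ∈ W) ∧ (∃ b ∈ T j, b ∉ W)) →
                B x = g x.1}.ncard : ℝ)
          ≤ (2 : ℝ) ^ (-(24 / 25 : ℝ) *
              ((E.filter (fun j => (∃ a ∈ T j, a ∈ W) ∧ (∃ b ∈ T j, b ∉ W))).card : ℝ)) *
            (𝒜'.ncard : ℝ)))
    (r : ℕ) (hr : 2 ≤ r) (f : Fin t → Fin r) (hf : ∀ p : Fin r, ∃ i ∈ V, f i = p) :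
    (({Bs : Fin r → ({x : Fin s // x ∈ E} → Fin t) |
        (∀ ρ : Fin r, Bs ρ ∈ 𝒜') ∧
        (↑V : Set (Fin t)).Pairwise fun i i' =>
          Disjoint {x : {x : Fin s // x ∈ E} | Bs (f i) x = i}
            {x : {x : Fin s // x ∈ E} | Bs (f i') x = i'}}).ncard : ℝ)
      ≤ (2 : ℝ) ^ (-(((E.filter fun j => ∃ a ∈ T j, ∃ b ∈ T j, f a ≠ f b).card : ℝ)) / 3) *
        (𝒜'.ncard : ℝ) ^ r := by
  classical
  -- endpoints of each edge
  choose aa bb haabb hTab using fun j => Finset.card_eq_two.mp (hT j)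
  have haT : ∀ j, aa j ∈ T j := fun j => by rw [hTab j]; simp
  have hbT : ∀ j, bb j ∈ T j := fun j => by rw [hTab j]; simp
  -- the cut induced by f
  set C : Finset (Fin s) := E.filter fun j => ∃ a ∈ T j, ∃ b ∈ T j, f a ≠ f b with hCdef
  have hCE : ∀ j ∈ C, j ∈ E := fun j hj => (Finset.mem_filter.mp hj).1
  have hCmem : ∀ j, j ∈ C ↔ j ∈ E ∧ f (aa j) ≠ f (bb j) := by
    intro j
    rw [hCdef, Finset.mem_filter]
    constructor
    · rintro ⟨hE, a, ha, b, hb, hab⟩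
      refine ⟨hE, ?_⟩
      rw [hTab j] at ha hb
      simp only [Finset.mem_insert, Finset.mem_singleton] at ha hb
      rcases ha with rfl | rfl <;> rcases hb with rfl | rfl
      · exact absurd rfl hab
      · exact hab
      · exact Ne.symm hab
      · exact absurd rfl hab
    · rintro ⟨hE, hab⟩
      exact ⟨hE, aa j, haT j, bb j, hbT j, hab⟩
  -- characterization of cut membership
  have hCutmem : ∀ j p, j ∈ cutF T E (WpF V f p) ↔
      j ∈ E ∧ ((f (aa j) = p ∧ f (bb j) ≠ p) ∨ (f (bb j) = p ∧ f (aa j) ≠ p)) := by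
    intro j p
    simp only [cutF, WpF, Finset.mem_filter]
    constructor
    · rintro ⟨hE, ⟨a, ha, haW⟩, ⟨b, hb, hbW⟩⟩
      refine ⟨hE, ?_⟩
      have hfa : f a = p := haW.2
      have hfb : f b ≠ p := fun h => hbW ⟨hTV j hE hb, h⟩
      rw [hTab j] at ha hb
      simp only [Finset.mem_insert, Finset.mem_singleton] at ha hb
      rcases ha with rfl | rfl <;> rcases hb with rfl | rfl
      · exact absurd hfa hfb
      · exact Or.inl ⟨hfa, hfb⟩
      · exact Or.inr ⟨hfa, hfb⟩
      · exact absurd hfa hfb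
    · rintro ⟨hE, h⟩
      refine ⟨hE, ?_, ?_⟩
      · rcases h with ⟨h1, h2⟩ | ⟨h1, h2⟩
        · exact ⟨aa j, haT j, hTV j hE (haT j), h1⟩
        · exact ⟨bb j, hbT j, hTV j hE (hbT j), h1⟩
      · rcases h with ⟨h1, h2⟩ | ⟨h1, h2⟩
        · exact ⟨bb j, hbT j, fun hm => h2 hm.2⟩
        · exact ⟨aa j, haT j, fun hm => h2 hm.2⟩
  have hCutC : ∀ p, ∀ j ∈ cutF T E (WpF V f p), j ∈ C := by
    intro p j hj
    rw [hCutmem j p] at hj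
    rw [hCmem]
    refine ⟨hj.1, ?_⟩
    rcases hj.2 with ⟨h1, h2⟩ | ⟨h1, h2⟩
    · exact fun h => h2 (h ▸ h1)
    · exact fun h => h2 (h ▸ h1.symm ▸ rfl)
  -- the parts are nonempty proper subsets
  have hWne : ∀ p, (WpF V f p).Nonempty := by
    intro p
    obtain ⟨i, hi, hfi⟩ := hf p
    exact ⟨i, Finset.mem_filter.mpr ⟨hi, hfi⟩⟩
  have hWss : ∀ p, WpF V f p ⊂ V := by
    intro p
    have hsub : WpF V f p ⊆ V := Finset.filter_subset _ _
    rw [Finset.ssubset_iff_of_subset hsub]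
    haveI : Nontrivial (Fin r) := Fin.nontrivial_iff_two_le.mpr hr
    obtain ⟨q, hq⟩ := exists_ne p
    obtain ⟨i, hi, hfi⟩ := hf q
    exact ⟨i, hi, by simp [WpF, hfi, hq]⟩
  -- sum of cut sizes
  have hcard_eq : ∀ D : Finset (Fin s), D ⊆ E →
      D.card = ∑ j ∈ E, if j ∈ D then 1 else 0 := by
    intro D hD
    have hDD : E.filter (fun j => j ∈ D) = D := by
      rw [Finset.filter_mem_eq_inter, Finset.inter_eq_right.mpr hD]
    conv_lhs => rw [← hDD]
    rw [Finset.card_filter]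
  have hsum : ∑ p : Fin r, (cutF T E (WpF V f p)).card = 2 * C.card := by
    calc ∑ p : Fin r, (cutF T E (WpF V f p)).card
        = ∑ p : Fin r, ∑ j ∈ E, if j ∈ cutF T E (WpF V f p) then 1 else 0 :=
          Finset.sum_congr rfl fun p _ => hcard_eq _ (Finset.filter_subset _ _)
      _ = ∑ j ∈ E, ∑ p : Fin r, if j ∈ cutF T E (WpF V f p) then 1 else 0 := Finset.sum_comm
      _ = ∑ j ∈ E, (Finset.univ.filter fun p : Fin r => j ∈ cutF T E (WpF V f p)).card :=
          Finset.sum_congr rfl fun j _ => (Finset.card_filter _ _).symm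
      _ = ∑ j ∈ E, if j ∈ C then 2 else 0 := by
          refine Finset.sum_congr rfl fun j hj => ?_
          by_cases hjC : j ∈ C
          · rw [if_pos hjC]
            have hne : f (aa j) ≠ f (bb j) := ((hCmem j).mp hjC).2
            have hflt : Finset.univ.filter (fun p : Fin r => j ∈ cutF T E (WpF V f p))
                = {f (aa j), f (bb j)} := by
              ext p
              simp only [Finset.mem_filter, Finset.mem_univ, true_and, Finset.mem_insert,
                Finset.mem_singleton, hCutmem j p]
              constructor
              · rintro ⟨-, ⟨h1, -⟩ | ⟨h1, -⟩⟩
                · exact Or.inl h1.symm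
                · exact Or.inr h1.symm
              · rintro (rfl | rfl)
                · exact ⟨hj, Or.inl ⟨rfl, fun h => hne h.symm⟩⟩
                · exact ⟨hj, Or.inr ⟨rfl, fun h => hne h⟩⟩
            rw [hflt, Finset.card_insert_of_notMem (by simpa using hne),
              Finset.card_singleton]
          · rw [if_neg hjC]
            have heq : f (aa j) = f (bb j) := by
              by_contra hne; exact hjC ((hCmem j).mpr ⟨hj, hne⟩)
            rw [Finset.card_eq_zero, Finset.filter_eq_empty_iff]
            intro p _
            rw [hCutmem j p]
            rintro ⟨-, ⟨h1, h2⟩ | ⟨h1, h2⟩⟩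
            · exact h2 (heq.symm.trans h1)
            · exact h2 (heq.trans h1)
      _ = 2 * C.card := by
          rw [← Finset.sum_filter, Finset.filter_mem_eq_inter,
            Finset.inter_eq_right.mpr (fun j hj => hCE j hj), Finset.sum_const,
            smul_eq_mul, mul_comm]
  -- finset version of 𝒜'
  have h𝒜fin : 𝒜'.Finite := Set.toFinite _
  set A : Finset ({x : Fin s // x ∈ E} → Fin t) := h𝒜fin.toFinset with hAdef
  have hA : ∀ B, B ∈ A ↔ B ∈ 𝒜' := fun B => Set.Finite.mem_toFinset _
  have hN : (A.card : ℕ) = 𝒜'.ncard := (Set.ncard_eq_toFinset_card _ h𝒜fin).symm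
  set d0 : Fin t := ⟨0, by omega⟩ with hd0
  -- patterns and fibers
  set Pats : Finset (Fin s → Fin t × Fin t) :=
    Fintype.piFinset fun j : Fin s =>
      if j ∈ C then allowedF T aa bb j else {(d0, d0)} with hPats
  set Fib : (Fin s → Fin t × Fin t) → Finset (Fin r → ({x : Fin s // x ∈ E} → Fin t)) :=
    fun φ => Fintype.piFinset fun p : Fin r =>
      SpF A (cutF T E (WpF V f p)) (gOf f aa bb φ p) with hFib
  -- the inclusion
  have hincl : {Bs : Fin r → ({x : Fin s // x ∈ E} → Fin t) |
        (∀ ρ : Fin r, Bs ρ ∈ 𝒜') ∧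
        (↑V : Set (Fin t)).Pairwise fun i i' =>
          Disjoint {x : {x : Fin s // x ∈ E} | Bs (f i) x = i}
            {x : {x : Fin s // x ∈ E} | Bs (f i') x = i'}} ⊆ ↑(Pats.biUnion Fib) := by
    rintro Bs ⟨hBmem, hBdisj⟩
    refine Finset.mem_coe.mpr (Finset.mem_biUnion.mpr ?_)
    refine ⟨fun j => if h : j ∈ C then
        (Bs (f (aa j)) ⟨j, hCE j h⟩, Bs (f (bb j)) ⟨j, hCE j h⟩) else (d0, d0), ?_, ?_⟩
    · rw [hPats, Fintype.mem_piFinset]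
      intro j
      by_cases h : j ∈ C
      · rw [if_pos h]
        simp only [dif_pos h]
        refine Finset.mem_erase.mpr ⟨?_, ?_⟩
        · intro heq
          have h1 : Bs (f (aa j)) ⟨j, hCE j h⟩ = aa j := congrArg Prod.fst heq
          have h2 : Bs (f (bb j)) ⟨j, hCE j h⟩ = bb j := congrArg Prod.snd heq
          have haV : (aa j : Fin t) ∈ (↑V : Set (Fin t)) :=
            Finset.mem_coe.mpr (hTV j (hCE j h) (haT j))
          have hbV : (bb j : Fin t) ∈ (↑V : Set (Fin t)) :=
            Finset.mem_coe.mpr (hTV j (hCE j h) (hbT j))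
          have hd : Disjoint {x : {x : Fin s // x ∈ E} | Bs (f (aa j)) x = aa j}
              {x : {x : Fin s // x ∈ E} | Bs (f (bb j)) x = bb j} :=
            hBdisj haV hbV (haabb j)
          exact Set.disjoint_left.mp hd h1 h2
        · exact Finset.mem_product.mpr
            ⟨h𝒜mem _ (hBmem _) ⟨j, hCE j h⟩, h𝒜mem _ (hBmem _) ⟨j, hCE j h⟩⟩
      · rw [if_neg h]
        simp only [dif_neg h]
        exact Finset.mem_singleton_self _
    · rw [hFib]
      rw [Fintype.mem_piFinset]
      intro p
      refine Finset.mem_filter.mpr ⟨(hA _).mpr (hBmem p), ?_⟩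
      intro x hx
      obtain ⟨hxE, hcase⟩ := (hCutmem x.1 p).mp hx
      have hxC : x.1 ∈ C := hCutC p x.1 hx
      have hxx : (⟨x.1, hCE x.1 hxC⟩ : {x : Fin s // x ∈ E}) = x := Subtype.ext rfl
      rcases hcase with ⟨h1, h2⟩ | ⟨h1, h2⟩
      · show Bs p x = gOf f aa bb _ p x.1
        simp only [gOf]
        rw [if_pos h1]
        simp only [dif_pos hxC, hxx, h1]
      · show Bs p x = gOf f aa bb _ p x.1
        simp only [gOf]
        rw [if_neg h2]
        simp only [dif_pos hxC, hxx, h1]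
  -- the per-fiber bound
  have hcut' : ∀ W : Finset (Fin t), W.Nonempty → W ⊂ V → ∀ g : Fin s → Fin t,
      (∀ j ∈ cutF T E W, g j ∈ T j) →
      (({B ∈ 𝒜' | ∀ x : {x : Fin s // x ∈ E}, x.1 ∈ cutF T E W → B x = g x.1}.ncard : ℝ)
        ≤ (2 : ℝ) ^ (-(24 / 25 : ℝ) * ((cutF T E W).card : ℝ)) * (𝒜'.ncard : ℝ)) := hcut
  have hfiber : ∀ φ ∈ Pats, ((Fib φ).card : ℝ) ≤
      (2 : ℝ) ^ (-(24 / 25 : ℝ) * (2 * C.card : ℝ)) * (𝒜'.ncard : ℝ) ^ r := by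
    intro φ hφP
    rw [hPats, Fintype.mem_piFinset] at hφP
    have hSp : ∀ p : Fin r,
        ((SpF A (cutF T E (WpF V f p)) (gOf f aa bb φ p)).card : ℝ) ≤
        (2 : ℝ) ^ (-(24 / 25 : ℝ) * ((cutF T E (WpF V f p)).card : ℝ)) * (𝒜'.ncard : ℝ) := by
      intro p
      have hg : ∀ j ∈ cutF T E (WpF V f p), gOf f aa bb φ p j ∈ T j := by
        intro j hj
        have hjC : j ∈ C := hCutC p j hj
        have hφj := hφP j
        rw [if_pos hjC] at hφj
        simp only [allowedF] at hφj
        have hmem := Finset.mem_product.mp (Finset.mem_of_mem_erase hφj)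
        simp only [gOf]
        split_ifs
        · exact hmem.1
        · exact hmem.2
      have hbnd := hcut' (WpF V f p) (hWne p) (hWss p) (gOf f aa bb φ p) hg
      have hset : ((SpF A (cutF T E (WpF V f p)) (gOf f aa bb φ p) : Finset _) : Set _) =
          {B ∈ 𝒜' | ∀ x : {x : Fin s // x ∈ E},
            x.1 ∈ cutF T E (WpF V f p) → B x = gOf f aa bb φ p x.1} := by
        ext B
        simp only [SpF, Finset.coe_filter, Set.mem_setOf_eq, hA]
      rw [← Set.ncard_coe_finset, hset]
      exact hbnd
    have hcardFib : (Fib φ).card =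
        ∏ p : Fin r, (SpF A (cutF T E (WpF V f p)) (gOf f aa bb φ p)).card := by
      rw [hFib]; exact Fintype.card_piFinset _
    rw [hcardFib, Nat.cast_prod]
    calc ∏ p : Fin r, ((SpF A (cutF T E (WpF V f p)) (gOf f aa bb φ p)).card : ℝ)
        ≤ ∏ p : Fin r, ((2 : ℝ) ^ (-(24 / 25 : ℝ) * ((cutF T E (WpF V f p)).card : ℝ)) *
            (𝒜'.ncard : ℝ)) :=
          Finset.prod_le_prod (fun p _ => Nat.cast_nonneg _) (fun p _ => hSp p)
      _ = (∏ p : Fin r, (2 : ℝ) ^ (-(24 / 25 : ℝ) * ((cutF T E (WpF V f p)).card : ℝ))) *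
            (𝒜'.ncard : ℝ) ^ r := by
          rw [Finset.prod_mul_distrib, Finset.prod_const, Finset.card_univ, Fintype.card_fin]
      _ = (2 : ℝ) ^ (-(24 / 25 : ℝ) * (2 * C.card : ℝ)) * (𝒜'.ncard : ℝ) ^ r := by
          congr 1
          have hstep : ∀ p : Fin r,
              (2 : ℝ) ^ (-(24 / 25 : ℝ) * ((cutF T E (WpF V f p)).card : ℝ)) =
              ((2 : ℝ) ^ (-(24 / 25 : ℝ))) ^ ((cutF T E (WpF V f p)).card : ℕ) := by
            intro p
            rw [← Real.rpow_natCast ((2 : ℝ) ^ (-(24 / 25 : ℝ))) _,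
              ← Real.rpow_mul (by norm_num : (0:ℝ) ≤ 2)]
          rw [Finset.prod_congr rfl (fun p _ => hstep p), Finset.prod_pow_eq_pow_sum, hsum,
            ← Real.rpow_natCast ((2 : ℝ) ^ (-(24 / 25 : ℝ))) _,
            ← Real.rpow_mul (by norm_num : (0:ℝ) ≤ 2)]
          push_cast
          ring_nf
  -- number of patterns
  have hPatsCard : Pats.card ≤ 3 ^ C.card := by
    have hall : ∀ j, (allowedF T aa bb j).card = 3 := by
      intro j
      simp only [allowedF]
      rw [Finset.card_erase_of_mem (Finset.mem_product.mpr ⟨haT j, hbT j⟩),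
        Finset.card_product, hT j]
    have h1 : Pats.card = ∏ j : Fin s,
        (if j ∈ C then allowedF T aa bb j else {(d0, d0)}).card := by
      rw [hPats]; exact Fintype.card_piFinset _
    have h2 : ∀ j : Fin s, (if j ∈ C then allowedF T aa bb j else {(d0, d0)}).card =
        if j ∈ C then 3 else 1 := by
      intro j
      split_ifs with h
      · exact hall j
      · exact Finset.card_singleton _
    rw [h1, Finset.prod_congr rfl (fun j _ => h2 j), Finset.prod_ite_mem,
      Finset.univ_inter, Finset.prod_const]
  -- the key numeric inequality
  have hnum : (3 : ℝ) ^ C.card * (2 : ℝ) ^ (-(24 / 25 : ℝ) * (2 * C.card : ℝ)) ≤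
      (2 : ℝ) ^ (-(C.card : ℝ) / 3) := by
    have hc : (0 : ℝ) ≤ (C.card : ℝ) := Nat.cast_nonneg _
    have h75 : (3 : ℝ) ^ (75 : ℕ) ≤ (2 : ℝ) ^ (119 : ℕ) := by norm_num
    have h3 : (3 : ℝ) ≤ (2 : ℝ) ^ (119 / 75 : ℝ) := by
      calc (3 : ℝ) = ((3 : ℝ) ^ (75 : ℕ)) ^ ((75 : ℝ)⁻¹) := by
            rw [← Real.rpow_natCast 3 75, ← Real.rpow_mul (by norm_num : (0:ℝ) ≤ 3)]
            norm_num
        _ ≤ ((2 : ℝ) ^ (119 : ℕ)) ^ ((75 : ℝ)⁻¹) :=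
            Real.rpow_le_rpow (by positivity) h75 (by norm_num)
        _ = (2 : ℝ) ^ (119 / 75 : ℝ) := by
            rw [← Real.rpow_natCast 2 119, ← Real.rpow_mul (by norm_num : (0:ℝ) ≤ 2)]
            norm_num
    have h1 : (3 : ℝ) ^ C.card ≤ (2 : ℝ) ^ ((119 / 75 : ℝ) * C.card) := by
      rw [← Real.rpow_natCast 3 C.card]
      calc (3 : ℝ) ^ (C.card : ℝ) ≤ ((2 : ℝ) ^ (119 / 75 : ℝ)) ^ (C.card : ℝ) :=
            Real.rpow_le_rpow (by norm_num) h3 hc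
        _ = (2 : ℝ) ^ ((119 / 75 : ℝ) * C.card) :=
            (Real.rpow_mul (by norm_num : (0:ℝ) ≤ 2) _ _).symm
    calc (3 : ℝ) ^ C.card * (2 : ℝ) ^ (-(24 / 25 : ℝ) * (2 * C.card : ℝ))
        ≤ (2 : ℝ) ^ ((119 / 75 : ℝ) * C.card) * (2 : ℝ) ^ (-(24 / 25 : ℝ) * (2 * C.card : ℝ)) :=
          mul_le_mul_of_nonneg_right h1 (by positivity)
      _ = (2 : ℝ) ^ ((119 / 75 : ℝ) * C.card + -(24 / 25 : ℝ) * (2 * C.card : ℝ)) :=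
          (Real.rpow_add (by norm_num) _ _).symm
      _ = (2 : ℝ) ^ (-(C.card : ℝ) / 3) := by
          congr 1
          ring
  -- put it together
  have hNnn : (0 : ℝ) ≤ (𝒜'.ncard : ℝ) ^ r := by positivity
  calc (({Bs : Fin r → ({x : Fin s // x ∈ E} → Fin t) |
        (∀ ρ : Fin r, Bs ρ ∈ 𝒜') ∧
        (↑V : Set (Fin t)).Pairwise fun i i' =>
          Disjoint {x : {x : Fin s // x ∈ E} | Bs (f i) x = i}
            {x : {x : Fin s // x ∈ E} | Bs (f i') x = i'}}).ncard : ℝ)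
      ≤ ((Pats.biUnion Fib).card : ℝ) := by
        rw [← Set.ncard_coe_finset]
        exact_mod_cast Nat.cast_le.mpr (Set.ncard_le_ncard hincl (Set.toFinite _))
    _ ≤ ∑ φ ∈ Pats, ((Fib φ).card : ℝ) := by
        exact_mod_cast Nat.cast_le.mpr Finset.card_biUnion_le
    _ ≤ ∑ _φ ∈ Pats, ((2 : ℝ) ^ (-(24 / 25 : ℝ) * (2 * C.card : ℝ)) * (𝒜'.ncard : ℝ) ^ r) :=
        Finset.sum_le_sum hfiber
    _ = (Pats.card : ℝ) * ((2 : ℝ) ^ (-(24 / 25 : ℝ) * (2 * C.card : ℝ)) * (𝒜'.ncard : ℝ) ^ r) := by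
        rw [Finset.sum_const, nsmul_eq_mul]
    _ ≤ (3 : ℝ) ^ C.card * ((2 : ℝ) ^ (-(24 / 25 : ℝ) * (2 * C.card : ℝ)) * (𝒜'.ncard : ℝ) ^ r) := by
        have : (Pats.card : ℝ) ≤ (3 : ℝ) ^ C.card := by exact_mod_cast Nat.cast_le.mpr hPatsCard
        exact mul_le_mul_of_nonneg_right this (by positivity)
    _ ≤ (2 : ℝ) ^ (-(C.card : ℝ) / 3) * (𝒜'.ncard : ℝ) ^ r := by
        rw [← mul_assoc]
        exact mul_le_mul_of_nonneg_right hnum hNnn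
end

section
/- Let G be a finite connected multigraph on a vertex set V with |V| ≥ 2, whose edges form a finite multiset of unordered pairs of distinct vertices (parallel edges allowed, no loops), and let γ₂(G) denote the minimum, over nonempty proper subsets W ⊊ V, of the number of edges (counted with multiplicity) having one endpoint in W and one in V∖W. Then for every integer c ≥ 1 and every integer r with 2 ≤ r ≤ |V|, the number of partitions of V into r nonempty parts whose number of crossing edges (edges with their two endpoints in different parts, counted with multiplicity) is at most c · γ₂(G) is at most |V|^{4c}. -/
set_option linter.unusedSectionVars false

section CutCounting
variable {V : Type*} [Fintype V] [DecidableEq V] {ι : Type*} [Fintype ι] (a b : ι → V)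

def IsPart (C : Finset (Finset V)) : Prop :=
  (∀ p ∈ C, p.Nonempty) ∧ (∀ p ∈ C, ∀ q ∈ C, p ≠ q → Disjoint p q) ∧ ∀ x : V, ∃ p ∈ C, x ∈ p

instance (C : Finset (Finset V)) : Decidable (IsPart C) := by unfold IsPart; infer_instance

def cross (Q : Finset (Finset V)) : Finset ι :=
  Finset.univ.filter fun i => ¬ ∃ p ∈ Q, a i ∈ p ∧ b i ∈ p

def Refines (C Q : Finset (Finset V)) : Prop := ∀ p ∈ C, ∃ q ∈ Q, p ⊆ q

instance (C Q : Finset (Finset V)) : Decidable (Refines C Q) := by unfold Refines; infer_instance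

def NN (r m : ℕ) (C : Finset (Finset V)) : Finset (Finset (Finset V)) :=
  Finset.univ.filter fun Q => Q.card = r ∧ IsPart Q ∧ (cross a b Q).card ≤ m ∧ Refines C Q

variable {a b}

lemma part_eq {C : Finset (Finset V)} (hC : IsPart C) {p q : Finset V} (hp : p ∈ C)
    (hq : q ∈ C) {x : V} (hx : x ∈ p) (hx' : x ∈ q) : p = q := by
  by_contra h
  exact Finset.disjoint_left.mp (hC.2.1 p hp q hq h) hx hx'

noncomputable def vrep [Nonempty V] (s : Finset V) : V :=
  if h : s.Nonempty then h.choose else Classical.arbitrary V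

lemma vrep_mem [Nonempty V] {s : Finset V} (h : s.Nonempty) : vrep s ∈ s := by
  rw [vrep, dif_pos h]; exact h.choose_spec

noncomputable def partOf (C : Finset (Finset V)) (x : V) : Finset V :=
  if h : ∃ p ∈ C, x ∈ p then h.choose else ∅

lemma partOf_mem {C : Finset (Finset V)} (hC : IsPart C) (x : V) :
    partOf C x ∈ C ∧ x ∈ partOf C x := by
  have h : ∃ p ∈ C, x ∈ p := hC.2.2 x
  rw [partOf, dif_pos h]
  exact h.choose_spec

lemma partOf_eq {C : Finset (Finset V)} (hC : IsPart C) {p : Finset V} (hp : p ∈ C) {x : V}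
    (hx : x ∈ p) : partOf C x = p :=
  part_eq hC (partOf_mem hC x).1 hp (partOf_mem hC x).2 hx

lemma mem_cross {Q : Finset (Finset V)} {i : ι} :
    i ∈ cross a b Q ↔ ¬ ∃ p ∈ Q, a i ∈ p ∧ b i ∈ p := by
  simp [cross]

lemma mem_NN {r m : ℕ} {C Q : Finset (Finset V)} :
    Q ∈ NN a b r m C ↔ Q.card = r ∧ IsPart Q ∧ (cross a b Q).card ≤ m ∧ Refines C Q := by
  simp [NN]

end CutCounting

section CutCounting
set_option linter.unusedSectionVars false
variable {V : Type*} [Fintype V] [DecidableEq V] [Nonempty V] {ι : Type*} [Fintype ι] {a b : ι → V}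

lemma coarse_part {C Q : Finset (Finset V)} (hC : IsPart C) (hQ : IsPart Q)
    (href : Refines C Q) {p : Finset V} (hp : p ∈ C) :
    partOf Q (vrep p) ∈ Q ∧ p ⊆ partOf Q (vrep p) := by
  obtain ⟨q0, hq0, hpq0⟩ := href p hp
  have hv : vrep p ∈ p := vrep_mem (hC.1 p hp)
  have : partOf Q (vrep p) = q0 := partOf_eq hQ hq0 (hpq0 hv)
  exact ⟨this ▸ hq0, this ▸ hpq0⟩

lemma vrep_inj_part {Q : Finset (Finset V)} (hQ : IsPart Q) {q q' : Finset V}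
    (hq : q ∈ Q) (hq' : q' ∈ Q) (h : vrep q = vrep q') : q = q' :=
  part_eq hQ hq hq' (vrep_mem (hQ.1 q hq)) (h ▸ vrep_mem (hQ.1 q' hq'))

lemma recon {C Q : Finset (Finset V)} (hC : IsPart C) (hQ : IsPart Q)
    (href : Refines C Q) {p₀ : Finset V} (hp₀ : p₀ ∈ C) :
    partOf Q (vrep p₀) =
      (C.filter fun p => vrep (partOf Q (vrep p)) = vrep (partOf Q (vrep p₀))).sup id := by
  apply Finset.Subset.antisymm
  · intro y hy
    have hpC : partOf C y ∈ C := (partOf_mem hC y).1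
    have hyp : y ∈ partOf C y := (partOf_mem hC y).2
    have h1 := coarse_part hC hQ href hpC
    have heq : partOf Q (vrep (partOf C y)) = partOf Q (vrep p₀) :=
      part_eq hQ h1.1 (coarse_part hC hQ href hp₀).1 (h1.2 hyp) hy
    refine Finset.mem_sup.mpr ⟨partOf C y, Finset.mem_filter.mpr ⟨hpC, by rw [heq]⟩, hyp⟩
  · rw [← Finset.le_iff_subset]
    apply Finset.sup_le
    intro p hp
    obtain ⟨hpC, hv⟩ := Finset.mem_filter.mp hp
    have h1 := coarse_part hC hQ href hpC
    have : partOf Q (vrep p) = partOf Q (vrep p₀) :=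
      vrep_inj_part hQ h1.1 (coarse_part hC hQ href hp₀).1 hv
    exact this ▸ h1.2

lemma NN_card_le_pow [Nonempty V] {C : Finset (Finset V)} (hC : IsPart C) (r m : ℕ) :
    (NN a b r m C).card ≤ Fintype.card V ^ C.card := by
  have := Finset.card_le_card_of_injOn
    (f := fun Q => (fun p : ↥C => vrep (partOf Q (vrep (p : Finset V)))))
    (t := (Finset.univ : Finset (↥C → V)))
    (s := NN a b r m C) (fun Q _ => Finset.mem_univ _) ?_
  · simpa [Fintype.card_fun] using this
  · intro Q hQmem Q' hQ'mem hF
    obtain ⟨-, hQ, -, href⟩ := mem_NN.mp hQmem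
    obtain ⟨-, hQ', -, href'⟩ := mem_NN.mp hQ'mem
    have hFp : ∀ p ∈ C, vrep (partOf Q (vrep p)) = vrep (partOf Q' (vrep p)) := by
      intro p hp
      exact congrFun hF ⟨p, hp⟩
    have main : ∀ {R S : Finset (Finset V)}, IsPart R → IsPart S → Refines C R → Refines C S →
        (∀ p ∈ C, vrep (partOf R (vrep p)) = vrep (partOf S (vrep p))) → R ⊆ S := by
      intro R S hR hS hrefR hrefS hfs
      intro q hq
      obtain ⟨x, hx⟩ := hR.1 q hq
      have hpC : partOf C x ∈ C := (partOf_mem hC x).1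
      have hyp : x ∈ partOf C x := (partOf_mem hC x).2
      have h1 := coarse_part hC hR hrefR hpC
      have hgq : partOf R (vrep (partOf C x)) = q := part_eq hR h1.1 hq (h1.2 hyp) hx
      have e1 := recon hC hR hrefR hpC
      have e2 := recon hC hS hrefS hpC
      have efil : (C.filter fun p => vrep (partOf R (vrep p)) = vrep (partOf R (vrep (partOf C x)))).sup id
          = (C.filter fun p => vrep (partOf S (vrep p)) = vrep (partOf S (vrep (partOf C x)))).sup id := by
        congr 1
        apply Finset.filter_congr
        intro p hp
        rw [hfs p hp, hfs _ hpC]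
      rw [← hgq, e1, efil, ← e2]
      exact (coarse_part hC hS hrefS hpC).1
    exact Finset.Subset.antisymm (main hQ hQ' href href' hFp)
      (main hQ' hQ href' href fun p hp => (hFp p hp).symm)

end CutCounting

section P3
variable {V : Type*} [Fintype V] [DecidableEq V] [Nonempty V] {ι : Type*} [Fintype ι] {a b : ι → V}

lemma part_ne_univ {C : Finset (Finset V)} (hC : IsPart C) (h2 : 2 ≤ C.card)
    {p : Finset V} (hp : p ∈ C) : p ≠ Finset.univ := by
  obtain ⟨q, hq, hqp⟩ := Finset.exists_mem_ne (s := C) (by omega) p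
  obtain ⟨y, hy⟩ := hC.1 q hq
  intro h
  exact Finset.disjoint_left.mp (hC.2.1 q hq p hp hqp) hy (h ▸ Finset.mem_univ y)

lemma boundary_eq_filter {C : Finset (Finset V)} (hC : IsPart C) {p : Finset V} (hp : p ∈ C) :
    (Finset.univ.filter fun i : ι => (a i ∈ p ∧ b i ∉ p) ∨ (b i ∈ p ∧ a i ∉ p)) =
      (cross a b C).filter fun i => (a i ∈ p ∧ b i ∉ p) ∨ (b i ∈ p ∧ a i ∉ p) := by
  ext i
  constructor
  · intro hi
    rw [Finset.mem_filter] at hi ⊢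
    refine ⟨mem_cross.mpr ?_, hi.2⟩
    rintro ⟨s, hs, hsa, hsb⟩
    rcases hi.2 with ⟨ha, hb⟩ | ⟨hb, ha⟩
    · exact hb (part_eq hC hs hp hsa ha ▸ hsb)
    · exact ha (part_eq hC hs hp hsb hb ▸ hsa)
  · intro hi
    rw [Finset.mem_filter] at hi ⊢
    exact ⟨Finset.mem_univ i, hi.2⟩

lemma gamma_bound {C : Finset (Finset V)} (hC : IsPart C) (h2 : 2 ≤ C.card) {γ : ℕ}
    (hγ : ∀ W : Finset V, W.Nonempty → W ≠ Finset.univ →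
      γ ≤ (Finset.univ.filter fun i : ι =>
        (a i ∈ W ∧ b i ∉ W) ∨ (b i ∈ W ∧ a i ∉ W)).card) :
    γ * C.card ≤ 2 * (cross a b C).card := by
  have h1 : γ * C.card ≤ ∑ p ∈ C, ((cross a b C).filter fun i =>
      (a i ∈ p ∧ b i ∉ p) ∨ (b i ∈ p ∧ a i ∉ p)).card := by
    have := Finset.card_nsmul_le_sum C (fun p => ((cross a b C).filter fun i =>
      (a i ∈ p ∧ b i ∉ p) ∨ (b i ∈ p ∧ a i ∉ p)).card) γ (fun p hp => by
        rw [← boundary_eq_filter hC hp]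
        exact hγ p (hC.1 p hp) (part_ne_univ hC h2 hp))
    simpa [mul_comm] using this
  refine h1.trans ?_
  have h2' : ∑ p ∈ C, ((cross a b C).filter fun i =>
      (a i ∈ p ∧ b i ∉ p) ∨ (b i ∈ p ∧ a i ∉ p)).card
      = ∑ i ∈ cross a b C, (C.filter fun p =>
        (a i ∈ p ∧ b i ∉ p) ∨ (b i ∈ p ∧ a i ∉ p)).card := by
    simp only [Finset.card_filter]
    exact Finset.sum_comm
  rw [h2']
  have hle : ∀ i ∈ cross a b C, (C.filter fun p =>
      (a i ∈ p ∧ b i ∉ p) ∨ (b i ∈ p ∧ a i ∉ p)).card ≤ 2 := by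
    intro i _
    have hsub : (C.filter fun p => (a i ∈ p ∧ b i ∉ p) ∨ (b i ∈ p ∧ a i ∉ p)) ⊆
        {partOf C (a i), partOf C (b i)} := by
      intro p hp
      obtain ⟨hpC, hpred⟩ := Finset.mem_filter.mp hp
      rcases hpred with ⟨ha, _⟩ | ⟨hb, _⟩
      · exact Finset.mem_insert.mpr (Or.inl (partOf_eq hC hpC ha).symm)
      · simp [partOf_eq hC hpC hb]
    calc _ ≤ ({partOf C (a i), partOf C (b i)} : Finset (Finset V)).card :=
          Finset.card_le_card hsub
      _ ≤ 2 := Finset.card_insert_le _ _ |>.trans (by simp)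
  have := Finset.sum_le_card_nsmul (cross a b C) _ 2 hle
  simpa [mul_comm] using this

lemma cross_pos {C : Finset (Finset V)} (hC : IsPart C) (h2 : 2 ≤ C.card)
    (hconn : ∀ W : Finset V, W.Nonempty → W ≠ Finset.univ →
      ∃ i : ι, (a i ∈ W ∧ b i ∉ W) ∨ (b i ∈ W ∧ a i ∉ W)) :
    0 < (cross a b C).card := by
  obtain ⟨p, hp⟩ : C.Nonempty := Finset.card_pos.mp (by omega)
  obtain ⟨i, hi⟩ := hconn p (hC.1 p hp) (part_ne_univ hC h2 hp)
  rw [Finset.card_pos]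
  refine ⟨i, mem_cross.mpr ?_⟩
  rintro ⟨s, hs, hsa, hsb⟩
  rcases hi with ⟨ha, hb⟩ | ⟨hb, ha⟩
  · exact hb (part_eq hC hs hp hsa ha ▸ hsb)
  · exact ha (part_eq hC hs hp hsb hb ▸ hsa)

end P3

section P4
variable {V : Type*} [Fintype V] [DecidableEq V] [Nonempty V] {ι : Type*} [Fintype ι] {a b : ι → V}

def mergeP (C : Finset (Finset V)) (p q : Finset V) : Finset (Finset V) :=
  insert (p ∪ q) ((C.erase p).erase q)

lemma mergeP_notMem {C : Finset (Finset V)} (hC : IsPart C) {p q : Finset V} (hp : p ∈ C)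
    (hne : p ≠ q) : p ∪ q ∉ (C.erase p).erase q := by
  intro h
  have hsC : p ∪ q ∈ C := Finset.mem_of_mem_erase (Finset.mem_of_mem_erase h)
  have hp' : p ∪ q ≠ p := Finset.ne_of_mem_erase (Finset.mem_of_mem_erase h)
  obtain ⟨x, hx⟩ := hC.1 p hp
  exact Finset.disjoint_left.mp (hC.2.1 p hp (p ∪ q) hsC (Ne.symm hp')) hx
    (Finset.subset_union_left hx)

lemma mergeP_card {C : Finset (Finset V)} (hC : IsPart C) {p q : Finset V} (hp : p ∈ C)
    (hq : q ∈ C) (hne : p ≠ q) : (mergeP C p q).card = C.card - 1 := by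
  have h2 : 2 ≤ C.card := Finset.one_lt_card.mpr ⟨p, hp, q, hq, hne⟩
  rw [mergeP, Finset.card_insert_of_notMem (mergeP_notMem hC hp hne),
    Finset.card_erase_of_mem (Finset.mem_erase.mpr ⟨Ne.symm hne, hq⟩),
    Finset.card_erase_of_mem hp]
  omega

lemma mergeP_isPart {C : Finset (Finset V)} (hC : IsPart C) {p q : Finset V} (hp : p ∈ C)
    (hq : q ∈ C) (hne : p ≠ q) : IsPart (mergeP C p q) := by
  have hsub : ∀ s ∈ (C.erase p).erase q, s ∈ C ∧ s ≠ p ∧ s ≠ q := by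
    intro s hs
    exact ⟨Finset.mem_of_mem_erase (Finset.mem_of_mem_erase hs),
      Finset.ne_of_mem_erase (Finset.mem_of_mem_erase hs), Finset.ne_of_mem_erase hs⟩
  refine ⟨?_, ?_, ?_⟩
  · intro s hs
    rcases Finset.mem_insert.mp hs with h | h
    · subst h; exact (hC.1 p hp).mono (Finset.subset_union_left)
    · exact hC.1 s (hsub s h).1
  · intro s hs t ht hst
    rcases Finset.mem_insert.mp hs with h | h <;> rcases Finset.mem_insert.mp ht with h' | h'
    · exact absurd (h.trans h'.symm) hst
    · subst h
      obtain ⟨htC, htp, htq⟩ := hsub t h'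
      rw [Finset.disjoint_union_left]
      exact ⟨hC.2.1 p hp t htC (Ne.symm htp), hC.2.1 q hq t htC (Ne.symm htq)⟩
    · subst h'
      obtain ⟨hsC, hsp, hsq⟩ := hsub s h
      rw [Finset.disjoint_union_right]
      exact ⟨hC.2.1 s hsC p hp hsp, hC.2.1 s hsC q hq hsq⟩
    · exact hC.2.1 s (hsub s h).1 t (hsub t h').1 hst
  · intro x
    obtain ⟨s, hs, hxs⟩ := hC.2.2 x
    by_cases hsp : s = p
    · exact ⟨p ∪ q, Finset.mem_insert_self _ _, Finset.mem_union_left _ (hsp ▸ hxs)⟩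
    by_cases hsq : s = q
    · exact ⟨p ∪ q, Finset.mem_insert_self _ _, Finset.mem_union_right _ (hsq ▸ hxs)⟩
    · exact ⟨s, Finset.mem_insert_of_mem (Finset.mem_erase.mpr ⟨hsq,
        Finset.mem_erase.mpr ⟨hsp, hs⟩⟩), hxs⟩

lemma mergeP_mem {C : Finset (Finset V)} {p q s : Finset V} (hs : s ∈ mergeP C p q) :
    s = p ∪ q ∨ s ∈ C := by
  rcases Finset.mem_insert.mp hs with h | h
  · exact Or.inl h
  · exact Or.inr (Finset.mem_of_mem_erase (Finset.mem_of_mem_erase h))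

end P4

section P5
variable {V : Type*} [Fintype V] [DecidableEq V] [Nonempty V] {ι : Type*} [Fintype ι] {a b : ι → V}

lemma main_ind {γ : ℕ}
    (hγ : ∀ W : Finset V, W.Nonempty → W ≠ Finset.univ →
      γ ≤ (Finset.univ.filter fun i : ι =>
        (a i ∈ W ∧ b i ∉ W) ∨ (b i ∈ W ∧ a i ∉ W)).card)
    (hconn : ∀ W : Finset V, W.Nonempty → W ≠ Finset.univ →
      ∃ i : ι, (a i ∈ W ∧ b i ∉ W) ∨ (b i ∈ W ∧ a i ∉ W))
    {c : ℕ} (hc : 1 ≤ c) (r : ℕ) :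
    ∀ k : ℕ, ∀ C : Finset (Finset V), IsPart C → C.card = 2*c + k →
      (NN a b r (c*γ) C).card ≤ Nat.choose (2*c+k) (2*c) * Fintype.card V ^ (2*c) := by
  intro k
  induction k with
  | zero =>
    intro C hC hcard
    have := NN_card_le_pow (a := a) (b := b) hC r (c*γ)
    rw [hcard] at this
    simpa [Nat.choose_self] using this
  | succ k ih =>
    intro C hC hcard
    set N := (NN a b r (c*γ) C).card with hN
    set B := Nat.choose (2*c+k) (2*c) * Fintype.card V ^ (2*c) with hB
    set T := Nat.choose (2*c+k+1) (2*c) * Fintype.card V ^ (2*c) with hT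
    set X := cross a b C with hXdef
    set x := X.card with hx
    have h2C : 2 ≤ C.card := by omega
    have hcut : γ * C.card ≤ 2 * x := gamma_bound hC h2C hγ
    have hxpos : 0 < x := cross_pos hC h2C hconn
    have hxc : c * γ < x := by
      rcases Nat.eq_zero_or_pos γ with h0 | h1
      · simpa [h0] using hxpos
      · have h3 : γ * (2*c+1) ≤ γ * C.card := Nat.mul_le_mul_left γ (by omega)
        have h4 : 2*(c*γ) + γ ≤ 2*x := by
          calc 2*(c*γ) + γ = γ*(2*c+1) := by ring
            _ ≤ γ * C.card := h3
            _ ≤ 2*x := hcut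
        omega
    set d := x - c*γ with hd
    have hd' : d + c*γ = x := by omega
    have hdpos : 0 < d := by omega
    -- step: for each crossing edge, surviving partitions coarsen the merged partition
    have hstep : ∀ i ∈ X,
        ((NN a b r (c*γ) C).filter fun Q => ∃ p ∈ Q, a i ∈ p ∧ b i ∈ p).card ≤ B := by
      intro i hi
      have hiX : ¬ ∃ p ∈ C, a i ∈ p ∧ b i ∈ p := mem_cross.mp (hXdef ▸ hi)
      have hpa := partOf_mem hC (a i)
      have hpb := partOf_mem hC (b i)
      set pa := partOf C (a i)
      set pb := partOf C (b i)
      have hne : pa ≠ pb := by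
        intro h
        exact hiX ⟨pa, hpa.1, hpa.2, by rw [h]; exact hpb.2⟩
      have hCi : IsPart (mergeP C pa pb) := mergeP_isPart hC hpa.1 hpb.1 hne
      have hCicard : (mergeP C pa pb).card = 2*c + k := by
        rw [mergeP_card hC hpa.1 hpb.1 hne, hcard]
        omega
      refine le_trans (Finset.card_le_card ?_) (ih (mergeP C pa pb) hCi hCicard)
      intro Q hQ
      obtain ⟨hQmem, hQcr⟩ := Finset.mem_filter.mp hQ
      obtain ⟨hQr, hQpart, hQcross, hQref⟩ := mem_NN.mp hQmem
      refine mem_NN.mpr ⟨hQr, hQpart, hQcross, ?_⟩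
      intro s hs
      rcases mergeP_mem hs with h | h
      · obtain ⟨q, hqQ, hqa, hqb⟩ := hQcr
        obtain ⟨qa, hqaQ, hpaqa⟩ := hQref pa hpa.1
        obtain ⟨qb, hqbQ, hpbqb⟩ := hQref pb hpb.1
        have e1 : qa = q := part_eq hQpart hqaQ hqQ (hpaqa hpa.2) hqa
        have e2 : qb = q := part_eq hQpart hqbQ hqQ (hpbqb hpb.2) hqb
        exact ⟨q, hqQ, h ▸ Finset.union_subset (e1 ▸ hpaqa) (e2 ▸ hpbqb)⟩
      · exact hQref s h
    -- double counting
    have hsum : N * d ≤ x * B := by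
      calc N * d = (NN a b r (c*γ) C).card • d := by rw [smul_eq_mul]
        _ ≤ ∑ Q ∈ NN a b r (c*γ) C,
              (X.filter fun j => ∃ p ∈ Q, a j ∈ p ∧ b j ∈ p).card := by
            apply Finset.card_nsmul_le_sum
            intro Q hQ
            obtain ⟨-, -, hQcross, -⟩ := mem_NN.mp hQ
            have hsplit := Finset.card_filter_add_card_filter_not
              (s := X) (p := fun j => ∃ p ∈ Q, a j ∈ p ∧ b j ∈ p)
            have hsub : (X.filter fun j => ¬ ∃ p ∈ Q, a j ∈ p ∧ b j ∈ p).card ≤ c*γ := by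
              refine le_trans (Finset.card_le_card ?_) hQcross
              intro j hj
              exact mem_cross.mpr (Finset.mem_filter.mp hj).2
            omega
        _ = ∑ i ∈ X, ((NN a b r (c*γ) C).filter fun Q => ∃ p ∈ Q, a i ∈ p ∧ b i ∈ p).card := by
            simp only [Finset.card_filter]
            exact Finset.sum_comm
        _ ≤ ∑ _i ∈ X, B := Finset.sum_le_sum hstep
        _ = x * B := by rw [Finset.sum_const, smul_eq_mul]
    -- combinatorial identity
    have hid : T * (k+1) = (2*c+k+1) * B := by
      rw [hT, hB]
      have hsymm1 : (2*c+k+1).choose (2*c) = (2*c+k+1).choose (k+1) := by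
        rw [← Nat.choose_symm (show k+1 ≤ 2*c+k+1 by omega)]
        congr 1
        omega
      have hsymm2 : (2*c+k).choose (2*c) = (2*c+k).choose k := by
        rw [← Nat.choose_symm (show k ≤ 2*c+k by omega)]
        congr 1
        omega
      have hmc := Nat.add_one_mul_choose_eq (2*c+k) k
      rw [hsymm1, hsymm2]
      have hkey : (2*c+k+1).choose (k+1) * (k+1) = (2*c+k+1) * (2*c+k).choose k :=
        (Nat.add_one_mul_choose_eq (2*c+k) k).symm
      calc (2*c+k+1).choose (k+1) * Fintype.card V ^ (2*c) * (k+1)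
          = ((2*c+k+1).choose (k+1) * (k+1)) * Fintype.card V ^ (2*c) := by ring
        _ = ((2*c+k+1) * (2*c+k).choose k) * Fintype.card V ^ (2*c) := by rw [hkey]
        _ = (2*c+k+1) * ((2*c+k).choose k * Fintype.card V ^ (2*c)) := by ring
    -- key2 : (k+1)*x ≤ (2*c+k+1)*d
    have h4 : (2*c+k+1) * (c*γ) ≤ 2*c*x := by
      have h5 : γ * (2*c+k+1) ≤ 2*x := by
        rw [show (2*c+k+1) = (2*c+(k+1)) from by omega, ← hcard]
        exact hcut
      calc (2*c+k+1) * (c*γ) = c * (γ * (2*c+k+1)) := by ring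
        _ ≤ c * (2*x) := Nat.mul_le_mul_left c h5
        _ = 2*c*x := by ring
    have key2 : (k+1)*x ≤ (2*c+k+1)*d := by
      have e3 : (2*c+k+1)*d + (2*c+k+1)*(c*γ) = 2*c*x + (k+1)*x := by
        calc (2*c+k+1)*d + (2*c+k+1)*(c*γ) = (2*c+k+1)*(d + c*γ) := by ring
          _ = (2*c+k+1)*x := by rw [hd']
          _ = 2*c*x + (k+1)*x := by ring
      omega
    -- conclude
    have final : N * ((k+1)*d) ≤ T * ((k+1)*d) := by
      calc N * ((k+1)*d) = (k+1) * (N*d) := by ring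
        _ ≤ (k+1) * (x*B) := Nat.mul_le_mul_left _ hsum
        _ = ((k+1)*x) * B := by ring
        _ ≤ ((2*c+k+1)*d) * B := Nat.mul_le_mul_right _ key2
        _ = (T * (k+1)) * d := by rw [hid]; ring
        _ = T * ((k+1)*d) := by ring
    have hpos : 0 < (k+1)*d := by positivity
    exact Nat.le_of_mul_le_mul_right final hpos

end P5

/-- cut counting: in a finite connected multigraph (edges indexed by `ι` with
endpoint maps `a, b`, no loops) on at least two vertices, for any `γ` that lower-bounds the
size of every 2-way cut (in particular for the min cut `γ₂(G)`), the number of partitions of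
the vertices into `r` nonempty parts with at most `c·γ` crossing edges is at most `|V|^(4c)`. -/
theorem cut_counting
    {V : Type*} [Fintype V] [DecidableEq V] (hV : 2 ≤ Fintype.card V)
    {ι : Type*} [Fintype ι] (a b : ι → V) (hab : ∀ i, a i ≠ b i)
    (hconn : ∀ W : Finset V, W.Nonempty → W ≠ Finset.univ →
      ∃ i : ι, (a i ∈ W ∧ b i ∉ W) ∨ (b i ∈ W ∧ a i ∉ W))
    (γ : ℕ)
    (hγ : ∀ W : Finset V, W.Nonempty → W ≠ Finset.univ →
      γ ≤ (Finset.univ.filter fun i : ι =>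
        (a i ∈ W ∧ b i ∉ W) ∨ (b i ∈ W ∧ a i ∉ W)).card)
    (c : ℕ) (hc : 1 ≤ c) (r : ℕ) (hr2 : 2 ≤ r) (hrV : r ≤ Fintype.card V) :
    ({Q : Finset (Finset V) | Q.card = r ∧ (∀ p ∈ Q, p.Nonempty) ∧
        (∀ p ∈ Q, ∀ q ∈ Q, p ≠ q → Disjoint p q) ∧
        (∀ x : V, ∃ p ∈ Q, x ∈ p) ∧
        (Finset.univ.filter fun i : ι => ¬ ∃ p ∈ Q, a i ∈ p ∧ b i ∈ p).card ≤ c * γ}).ncard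
      ≤ Fintype.card V ^ (4 * c) := by
  have hne : Nonempty V := Fintype.card_pos_iff.mp (by omega)
  set n := Fintype.card V with hn
  -- the discrete partition
  set C₀ : Finset (Finset V) := Finset.univ.image (fun x : V => ({x} : Finset V)) with hC₀
  have hC₀part : IsPart C₀ := by
    refine ⟨?_, ?_, ?_⟩
    · intro p hp
      obtain ⟨x, -, rfl⟩ := Finset.mem_image.mp hp
      exact Finset.singleton_nonempty x
    · intro p hp q hq hpq
      obtain ⟨x, -, rfl⟩ := Finset.mem_image.mp hp
      obtain ⟨y, -, rfl⟩ := Finset.mem_image.mp hq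
      simpa using fun h => hpq (by rw [h])
    · intro x
      exact ⟨{x}, Finset.mem_image.mpr ⟨x, Finset.mem_univ x, rfl⟩, Finset.mem_singleton_self x⟩
  have hC₀card : C₀.card = n := by
    rw [hC₀, Finset.card_image_of_injective _ Finset.singleton_injective, Finset.card_univ]
  -- the set in question is the coarsenings of the discrete partition
  have hset : {Q : Finset (Finset V) | Q.card = r ∧ (∀ p ∈ Q, p.Nonempty) ∧
        (∀ p ∈ Q, ∀ q ∈ Q, p ≠ q → Disjoint p q) ∧
        (∀ x : V, ∃ p ∈ Q, x ∈ p) ∧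
        (Finset.univ.filter fun i : ι => ¬ ∃ p ∈ Q, a i ∈ p ∧ b i ∈ p).card ≤ c * γ}
      = ↑(NN a b r (c*γ) C₀) := by
    ext Q
    simp only [Set.mem_setOf_eq, Finset.coe_filter, NN, Set.mem_setOf_eq, Finset.mem_coe,
      Finset.mem_filter, Finset.mem_univ, true_and]
    constructor
    · rintro ⟨h1, h2, h3, h4, h5⟩
      refine ⟨h1, ⟨h2, h3, h4⟩, ?_, ?_⟩
      · simpa [cross] using h5
      · intro p hp
        obtain ⟨x, -, rfl⟩ := Finset.mem_image.mp hp
        obtain ⟨q, hq, hxq⟩ := h4 x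
        exact ⟨q, hq, Finset.singleton_subset_iff.mpr hxq⟩
    · rintro ⟨h1, ⟨h2, h3, h4⟩, h5, -⟩
      exact ⟨h1, h2, h3, h4, by simpa [cross] using h5⟩
  rw [hset, Set.ncard_coe_finset]
  by_cases hbig : 2*c ≤ n
  · have := main_ind hγ hconn hc r (n - 2*c) C₀ hC₀part (by omega)
    rw [show 2*c + (n - 2*c) = n from by omega] at this
    calc (NN a b r (c*γ) C₀).card ≤ n.choose (2*c) * n ^ (2*c) := this
      _ ≤ n ^ (2*c) * n ^ (2*c) := by
          exact Nat.mul_le_mul_right _ (Nat.choose_le_pow n (2*c))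
      _ = n ^ (4*c) := by rw [← pow_add]; congr 1; omega
  · calc (NN a b r (c*γ) C₀).card ≤ n ^ C₀.card := NN_card_le_pow hC₀part r (c*γ)
      _ = n ^ n := by rw [hC₀card]
      _ ≤ n ^ (4*c) := Nat.pow_le_pow_right (by omega) (by omega)
end

section
/- There exist constants N and C such that for all integers n ≥ N and k ≥ C·ln(n), the function f : {0, 1, …, n−3} → ℝ defined by f(i) := C(n, i) · (ik)!/(k!)^i · e^{ik}/(n−2)^{ik} attains its maximum at i = n−3; that is, f(i) ≤ f(n−3) for all 0 ≤ i ≤ n−3. -/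
/-!
Write `f(i) = C(n,i) · M(i) · (e/(n-2))^(ik)` with `M(i) = (ik)!/(k!)^i`. Stirling-type bounds give
`i^(ik)/(e√k)^i ≤ M(i) ≤ (ie)^(ik)`. For `2i ≤ n` this yields `f(i) ≤ 2^n · 4^(ik) ≤ 2^(n(k+1))`,
while `f(n-3) ≥ e^((n-4)k)/(e√k)^(n-3)`, which is far larger once `k ≫ 1`. For `2i > n` the
ratio `f(i+1)/f(i) = (n-i)/(i+1) · C((i+1)k,k) · (e/(n-2))^k` is at least `(e/2)^k/n ≥ 1`
because `C((i+1)k,k) ≥ (i+1)^k`, and `(e/2)^k ≥ n` is where `k ≥ C log n` enters.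
-/

open Real
open scoped Nat

theorem Nat.pow_mul_factorial_le_pow_mul_descFactorial {m k : ℕ} (h : k ≤ m) :
    m ^ k * k ! ≤ k ^ k * m.descFactorial k := by
  rw [← Nat.descFactorial_self, Nat.descFactorial_eq_prod_range, Nat.descFactorial_eq_prod_range, ← Finset.card_range k,
    ← Finset.prod_const, ← Finset.prod_const, Finset.card_range, ← Finset.prod_mul_distrib,
    ← Finset.prod_mul_distrib]
  refine Finset.prod_le_prod' fun j _ => ?_
  rw [Nat.mul_sub, Nat.mul_sub, Nat.mul_comm m k]
  exact Nat.sub_le_sub_left (Nat.mul_le_mul_right j h) _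

theorem Nat.div_pow_le_choose {α : Type*} [Semifield α] [LinearOrder α] [IsStrictOrderedRing α]
    {m k : ℕ} (h : k ≤ m) : ((m : α) / k) ^ k ≤ m.choose k := by
  rcases k.eq_zero_or_pos with rfl | hk
  · simp
  have key := Nat.pow_mul_factorial_le_pow_mul_descFactorial h
  rw [Nat.descFactorial_eq_factorial_mul_choose, Nat.mul_left_comm,
    Nat.mul_comm _ k !, Nat.mul_le_mul_left_iff k.factorial_pos] at key
  rw [div_pow, div_le_iff₀ (by positivity), mul_comm]
  exact_mod_cast key

theorem pow_le_factorial_mul_exp (k : ℕ) : (k : ℝ) ^ k ≤ k ! * exp k := by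
  have h := pow_div_factorial_le_exp (k : ℝ) k.cast_nonneg k
  rwa [div_le_iff₀' (by positivity)] at h

theorem factorial_le_exp_one_mul_sqrt_mul_pow {k : ℕ} (hk : k ≠ 0) :
    (k ! : ℝ) ≤ exp 1 * √k * (k / exp 1) ^ k := by
  obtain ⟨m, rfl⟩ := Nat.exists_eq_succ_of_ne_zero hk
  have h : Stirling.stirlingSeq (m + 1) ≤ Stirling.stirlingSeq 1 :=
    Stirling.stirlingSeq'_antitone (Nat.zero_le m)
  rw [Stirling.stirlingSeq_one, Stirling.stirlingSeq, div_le_iff₀ (by positivity)] at h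
  calc ((m + 1)! : ℝ) ≤ exp 1 / √2 * (√(2 * (m + 1 : ℕ)) * ((m + 1 : ℕ) / exp 1) ^ (m + 1)) := h
    _ = _ := by
      rw [Real.sqrt_mul zero_le_two]
      field_simp

theorem factorial_mul_div_factorial_pow_le (i k : ℕ) :
    ((i * k)! : ℝ) / (k ! : ℝ) ^ i ≤ (i * exp 1) ^ (i * k) := by
  rw [div_le_iff₀ (by positivity)]
  calc ((i * k)! : ℝ) ≤ ((i * k : ℕ) : ℝ) ^ (i * k) := by exact_mod_cast (i * k).factorial_le_pow
    _ = (i : ℝ) ^ (i * k) * ((k : ℝ) ^ k) ^ i := by push_cast; ring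
    _ ≤ (i : ℝ) ^ (i * k) * (k ! * exp k) ^ i := by gcongr; exact pow_le_factorial_mul_exp k
    _ = (i * exp 1) ^ (i * k) * (k ! : ℝ) ^ i := by rw [← exp_one_pow]; ring

theorem pow_div_le_factorial_mul_div_factorial_pow (i : ℕ) {k : ℕ} (hk : k ≠ 0) :
    (i : ℝ) ^ (i * k) / (exp 1 * √k) ^ i ≤ ((i * k)! : ℝ) / (k ! : ℝ) ^ i := by
  rw [div_le_div_iff₀ (by positivity) (by positivity)]
  calc (i : ℝ) ^ (i * k) * (k ! : ℝ) ^ i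
      ≤ (i : ℝ) ^ (i * k) * (exp 1 * √k * (k / exp 1) ^ k) ^ i := by
        gcongr; exact factorial_le_exp_one_mul_sqrt_mul_pow hk
    _ = ((i * k : ℕ) : ℝ) ^ (i * k) / exp (i * k : ℕ) * (exp 1 * √k) ^ i := by
        rw [← exp_one_pow]; push_cast; ring
    _ ≤ ((i * k)! : ℝ) * (exp 1 * √k) ^ i := by
        gcongr
        rw [div_le_iff₀ (exp_pos _)]
        exact pow_le_factorial_mul_exp _

theorem exp_sub_one_le_mul_div_add_one_pow (m : ℕ) :
    exp ((m : ℝ) - 1) ≤ (exp 1 * m / (m + 1)) ^ m := by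
  rcases m.eq_zero_or_pos with rfl | hm
  · simp
  have hm' : (0 : ℝ) < m := by exact_mod_cast hm
  have h : exp (1 - 1 / m) ≤ exp 1 * m / (m + 1) := by
    rw [exp_sub, div_le_div_iff₀ (exp_pos _) (by positivity)]
    have := add_one_le_exp (1 / (m : ℝ))
    calc exp 1 * (m + 1) = exp 1 * m * (1 / m + 1) := by field_simp; ring
      _ ≤ exp 1 * m * exp (1 / m) := by gcongr
  calc exp ((m : ℝ) - 1) = exp (1 - 1 / m) ^ m := by rw [← exp_nat_mul]; field_simp
    _ ≤ _ := by gcongr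

theorem le_exp_one_div_two_pow {x : ℝ} (hx : 0 < x) {k : ℕ} (h : 4 * log x ≤ k) :
    x ≤ (exp 1 / 2) ^ k := by
  have hlog2 := log_two_lt_d9
  calc x = exp (log x) := (exp_log hx).symm
    _ ≤ exp (k * (1 - log 2)) := by gcongr; nlinarith [k.cast_nonneg (α := ℝ)]
    _ = (exp 1 / 2) ^ k := by rw [exp_nat_mul, exp_sub, exp_log two_pos]

noncomputable def multinomialTerm (n k i : ℕ) : ℝ :=
  (n.choose i : ℝ) * ((i * k)! : ℝ) / (k ! : ℝ) ^ i * exp ((i : ℝ) * k) / ((n : ℝ) - 2) ^ (i * k)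

theorem multinomialTerm_eq (n k i : ℕ) :
    multinomialTerm n k i =
      n.choose i * (((i * k)! : ℝ) / (k ! : ℝ) ^ i) * (exp 1 / (n - 2)) ^ (i * k) := by
  rw [multinomialTerm, show (i : ℝ) * k = (i * k : ℕ) by push_cast; ring, ← exp_one_pow, div_pow]
  ring

theorem multinomialTerm_succ (n k i : ℕ) :
    multinomialTerm n k (i + 1) = multinomialTerm n k i *
      ((n - i : ℕ) / (i + 1) * ((i + 1) * k).choose k * (exp 1 / (n - 2)) ^ k) := by
  have hchoose : (n.choose (i + 1) : ℝ) = n.choose i * (n - i : ℕ) / (i + 1) := by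
    rw [eq_div_iff (by positivity)]; exact_mod_cast n.choose_succ_right_eq i
  have hfact : (((i + 1) * k)! : ℝ) = ((i + 1) * k).choose k * k ! * (i * k)! := by
    rw [show (i + 1) * k = i * k + k by ring]
    exact_mod_cast (Nat.add_choose_mul_factorial_mul_factorial (i * k) k).symm.trans (by ring)
  rw [multinomialTerm_eq, multinomialTerm_eq, hchoose, hfact, add_one_mul i k, pow_add, pow_succ]
  field_simp
  ring

theorem multinomialTerm_le_succ {n k i : ℕ} (hn : 2 < n) (hin : i < n) (hi : n ≤ 2 * i + 4)
    (hk : (n : ℝ) ≤ (exp 1 / 2) ^ k) : multinomialTerm n k i ≤ multinomialTerm n k (i + 1) := by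
  have hn' : (2 : ℝ) < n := by exact_mod_cast hn
  have hq : 0 ≤ exp 1 / (n - 2) := div_nonneg (exp_pos 1).le (by linarith)
  have hk0 : k ≠ 0 := by rintro rfl; norm_num at hk; linarith
  have hchoose : ((i + 1 : ℕ) : ℝ) ^ k ≤ ((i + 1) * k).choose k := by
    have := Nat.div_pow_le_choose (α := ℝ) (Nat.le_mul_of_pos_left k i.succ_pos)
    rwa [Nat.cast_mul, mul_div_cancel_right₀ _ (by exact_mod_cast hk0)] at this
  have hbase : exp 1 / 2 ≤ (i + 1) * (exp 1 / (n - 2)) := by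
    rw [mul_div_assoc', div_le_div_iff₀ two_pos (by linarith)]
    have : (n : ℝ) ≤ 2 * i + 4 := by exact_mod_cast hi
    nlinarith [exp_pos 1]
  have hin' : (1 : ℝ) ≤ (n - i : ℕ) := by exact_mod_cast Nat.sub_pos_of_lt hin
  have hi' : ((i + 1 : ℕ) : ℝ) ≤ n := by exact_mod_cast hin
  rw [multinomialTerm_succ]
  refine le_mul_of_one_le_right
    (by rw [multinomialTerm_eq]; exact mul_nonneg (by positivity) (pow_nonneg hq _)) ?_
  calc (1 : ℝ) ≤ (exp 1 / 2) ^ k / n := by rw [one_le_div (by linarith)]; exact hk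
    _ ≤ (((i + 1 : ℕ) : ℝ) * (exp 1 / (n - 2))) ^ k / (i + 1 : ℕ) := by
      gcongr
      push_cast
      exact hbase
    _ = 1 / (i + 1 : ℕ) * ((i + 1 : ℕ) : ℝ) ^ k * (exp 1 / (n - 2)) ^ k := by ring
    _ ≤ (n - i : ℕ) / (i + 1) * ((i + 1) * k).choose k * (exp 1 / (n - 2)) ^ k := by
      push_cast at hchoose ⊢
      gcongr

theorem multinomialTerm_le_sub_three_of_lt_two_mul {n k i : ℕ} (hk : (n : ℝ) ≤ (exp 1 / 2) ^ k)
    (hi : n < 2 * i) (hin : i ≤ n - 3) :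
    multinomialTerm n k i ≤ multinomialTerm n k (n - 3) := by
  refine monotoneOn_of_le_succ Set.ordConnected_Icc (fun a _ ⟨hia, _⟩ ⟨_, ha⟩ => ?_)
    ⟨le_rfl, hin⟩ ⟨hin, le_rfl⟩ hin
  rw [Order.succ_eq_add_one] at ha ⊢
  exact multinomialTerm_le_succ (by omega) (by omega) (by omega) hk

theorem multinomialTerm_le_two_pow {n k i : ℕ} (hn : 30 ≤ n) (hi : 2 * i ≤ n) :
    multinomialTerm n k i ≤ 2 ^ (n * (k + 1)) := by
  have hn' : (30 : ℝ) ≤ n := by exact_mod_cast hn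
  have hi' : 2 * (i : ℝ) ≤ n := by exact_mod_cast hi
  have hq : 0 ≤ exp 1 / (n - 2) := div_nonneg (exp_pos 1).le (by linarith)
  have hbase : i * exp 1 * (exp 1 / (n - 2)) ≤ 4 := by
    have he : exp 1 * exp 1 ≤ 7.39 := by nlinarith [exp_one_lt_d9, exp_pos 1]
    rw [mul_div_assoc', div_le_iff₀ (by linarith), mul_assoc]
    nlinarith [mul_le_mul_of_nonneg_left he (i.cast_nonneg (α := ℝ))]
  rw [multinomialTerm_eq]
  calc _ ≤ (2 : ℝ) ^ n * (i * exp 1) ^ (i * k) * (exp 1 / (n - 2)) ^ (i * k) := by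
        gcongr
        · exact_mod_cast n.choose_le_two_pow i
        · exact factorial_mul_div_factorial_pow_le i k
    _ = 2 ^ n * (i * exp 1 * (exp 1 / (n - 2))) ^ (i * k) := by rw [mul_pow]; ring
    _ ≤ 2 ^ n * 4 ^ (i * k) := by gcongr
    _ = 2 ^ n * 2 ^ (2 * i * k) := by rw [mul_assoc 2 i k, pow_mul (2 : ℝ) 2]; norm_num
    _ ≤ 2 ^ n * 2 ^ (n * k) := by gcongr; norm_num
    _ = 2 ^ (n * (k + 1)) := by ring

theorem exp_div_le_multinomialTerm_sub_three {n k : ℕ} (hn : 3 < n) (hk : k ≠ 0) :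
    exp (((n : ℝ) - 4) * k) / (exp 1 * √k) ^ (n - 3) ≤ multinomialTerm n k (n - 3) := by
  have hm : (n : ℝ) - 2 = (n - 3 : ℕ) + 1 := by push_cast [Nat.cast_sub hn.le]; ring
  have hm' : (n : ℝ) - 4 = (n - 3 : ℕ) - 1 := by push_cast [Nat.cast_sub hn.le]; ring
  rw [multinomialTerm_eq, hm, hm']
  set m := n - 3
  calc exp (((m : ℝ) - 1) * k) / (exp 1 * √k) ^ m
      = exp ((m : ℝ) - 1) ^ k / (exp 1 * √k) ^ m := by rw [mul_comm, exp_nat_mul]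
    _ ≤ ((exp 1 * m / (m + 1)) ^ m) ^ k / (exp 1 * √k) ^ m := by
        gcongr; exact exp_sub_one_le_mul_div_add_one_pow m
    _ = 1 * ((m : ℝ) ^ (m * k) / (exp 1 * √k) ^ m) * (exp 1 / (m + 1)) ^ (m * k) := by ring
    _ ≤ n.choose m * (((m * k)! : ℝ) / (k ! : ℝ) ^ m) * (exp 1 / (m + 1)) ^ (m * k) := by
        gcongr ?_ * ?_ * _
        · exact_mod_cast Nat.choose_pos (Nat.sub_le n 3)
        · exact pow_div_le_factorial_mul_div_factorial_pow m hk

theorem two_pow_le_exp_div {n k : ℕ} (hn : 1000 ≤ n) (hk : 600 ≤ k) :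
    (2 : ℝ) ^ (n * (k + 1)) ≤ exp (((n : ℝ) - 4) * k) / (exp 1 * √k) ^ (n - 3) := by
  have hn' : (1000 : ℝ) ≤ n := by exact_mod_cast hn
  have hk' : (600 : ℝ) ≤ k := by exact_mod_cast hk
  have htwo : (2 : ℝ) ≤ exp (7 / 10) := by
    rw [← exp_log two_pos]; gcongr; linarith [log_two_lt_d9]
  have hsqrt : exp 1 * √k ≤ exp (k / 10) := by
    have hs : √(k : ℝ) ≤ k := Real.sqrt_le_self_iff.mpr (Or.inr (by linarith))
    calc exp 1 * √k ≤ 3 * k := by gcongr; linarith [exp_one_lt_d9]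
      _ ≤ (k / 10 : ℝ) ^ 2 / 2 ! := by norm_num; nlinarith
      _ ≤ exp (k / 10) := pow_div_factorial_le_exp _ (by positivity) 2
  rw [le_div_iff₀ (by positivity)]
  calc (2 : ℝ) ^ (n * (k + 1)) * (exp 1 * √k) ^ (n - 3)
      ≤ exp (7 / 10) ^ (n * (k + 1)) * exp (k / 10) ^ (n - 3) := by gcongr
    _ ≤ exp (7 / 10) ^ (n * (k + 1)) * exp (k / 10) ^ n := by
        gcongr
        · exact one_le_exp (by positivity)
        · exact Nat.sub_le n 3
    _ ≤ exp (((n : ℝ) - 4) * k) := by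
        rw [← exp_nat_mul, ← exp_nat_mul, ← exp_add]
        gcongr
        push_cast
        nlinarith

theorem multinomialTerm_le_sub_three_of_two_mul_le {n k i : ℕ} (hn : 1000 ≤ n) (hk : 600 ≤ k)
    (hi : 2 * i ≤ n) : multinomialTerm n k i ≤ multinomialTerm n k (n - 3) :=
  calc multinomialTerm n k i ≤ 2 ^ (n * (k + 1)) := multinomialTerm_le_two_pow (by omega) hi
    _ ≤ exp (((n : ℝ) - 4) * k) / (exp 1 * √k) ^ (n - 3) := two_pow_le_exp_div hn hk
    _ ≤ multinomialTerm n k (n - 3) := exp_div_le_multinomialTerm_sub_three (by omega) (by omega)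

/-- for `n` large and `k ≥ C·ln n`, the function
`f(i) = C(n,i)·(ik)!/(k!)^i · e^(ik)/(n−2)^(ik)` on `{0, …, n−3}` attains its maximum
at `i = n − 3`. -/
theorem combinatorial_function_maximized_at_end :
    ∃ (N : ℕ) (C : ℝ), ∀ n k : ℕ, N ≤ n → C * Real.log n ≤ (k : ℝ) →
      ∀ i : ℕ, i ≤ n - 3 →
        (n.choose i : ℝ) * (Nat.factorial (i * k) : ℝ) / ((Nat.factorial k : ℝ)) ^ i *
            Real.exp ((i : ℝ) * (k : ℝ)) / ((n : ℝ) - 2) ^ (i * k)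
          ≤ (n.choose (n - 3) : ℝ) * (Nat.factorial ((n - 3) * k) : ℝ) /
              ((Nat.factorial k : ℝ)) ^ (n - 3) *
            Real.exp (((n - 3 : ℕ) : ℝ) * (k : ℝ)) / ((n : ℝ) - 2) ^ ((n - 3) * k) := by
  refine ⟨1000, 100, fun n k hn hk i hi => ?_⟩
  have hn' : (1000 : ℝ) ≤ n := by exact_mod_cast hn
  have hlog : 6 ≤ log n := by
    rw [le_log_iff_exp_le (by positivity)]
    calc exp 6 = exp 1 ^ 6 := by rw [exp_one_pow]; norm_num
      _ ≤ 3 ^ 6 := by gcongr; linarith [exp_one_lt_d9]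
      _ ≤ n := by linarith
  have hk600 : 600 ≤ k := by exact_mod_cast (show (600 : ℝ) ≤ k by linarith)
  have hpow : (n : ℝ) ≤ (exp 1 / 2) ^ k := le_exp_one_div_two_pow (by positivity) (by linarith)
  show multinomialTerm n k i ≤ multinomialTerm n k (n - 3)
  rcases le_or_gt (2 * i) n with h | h
  · exact multinomialTerm_le_sub_three_of_two_mul_le hn hk600 h
  · exact multinomialTerm_le_sub_three_of_lt_two_mul hpow h hi
end

section
/- There exists an integer N such that for all integers n ≥ N and all integers k with 2 ≤ k ≤ n, the multinomial coefficient satisfies ((n−2)k)! / (k!)^{n−2} ≤ (n−2)^{(n−2)k} / k^{n/2 − 1}, where the exponents are taken over the reals. -/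
open Real

lemma six_sq_le_two_pow : ∀ m : ℕ, 10 ≤ m → 6 * m ^ 2 ≤ 2 ^ m := by
  intro m hm
  induction m, hm using Nat.le_induction with
  | base => norm_num
  | succ m hm ih =>
    have h1 : 6 * (m + 1) ^ 2 ≤ 2 * (6 * m ^ 2) := by nlinarith
    calc 6 * (m + 1) ^ 2 ≤ 2 * (6 * m ^ 2) := h1
      _ ≤ 2 * 2 ^ m := by omega
      _ = 2 ^ (m + 1) := by ring

lemma stirling_upper (M : ℕ) (hM : 1 ≤ M) :
    (M.factorial : ℝ) ≤ Real.exp 1 * Real.sqrt M * ((M : ℝ) / Real.exp 1) ^ M := by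
  have h1 : Stirling.stirlingSeq M ≤ Real.exp 1 / Real.sqrt 2 := by
    rw [← Stirling.stirlingSeq_one]
    obtain ⟨m, rfl⟩ := Nat.exists_eq_add_of_le hM
    have := Stirling.stirlingSeq'_antitone (Nat.zero_le m)
    simpa [Function.comp, Nat.succ_eq_add_one, Nat.add_comm] using this
  have hMpos : (0:ℝ) < M := by exact_mod_cast hM
  have hpos : (0:ℝ) < Real.sqrt (2 * M) * ((M : ℝ) / Real.exp 1) ^ M := by positivity
  have hdef : (M.factorial : ℝ) =
      Stirling.stirlingSeq M * (Real.sqrt (2 * M) * ((M : ℝ) / Real.exp 1) ^ M) := by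
    rw [Stirling.stirlingSeq]
    field_simp
  rw [hdef]
  have h2 : Real.sqrt (2 * M) = Real.sqrt 2 * Real.sqrt M := Real.sqrt_mul (by norm_num) _
  calc Stirling.stirlingSeq M * (Real.sqrt (2 * M) * ((M : ℝ) / Real.exp 1) ^ M)
      ≤ (Real.exp 1 / Real.sqrt 2) * (Real.sqrt (2 * M) * ((M : ℝ) / Real.exp 1) ^ M) :=
        mul_le_mul_of_nonneg_right h1 hpos.le
    _ = Real.exp 1 * Real.sqrt M * ((M : ℝ) / Real.exp 1) ^ M := by
        rw [h2]
        have : Real.sqrt 2 ≠ 0 := by positivity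
        field_simp

lemma stirling_lower (k : ℕ) (hk : 1 ≤ k) :
    2 * Real.sqrt k * ((k : ℝ) / Real.exp 1) ^ k ≤ (k.factorial : ℝ) := by
  have h1 : Real.sqrt π ≤ Stirling.stirlingSeq k := by
    obtain ⟨m, rfl⟩ := Nat.exists_eq_add_of_le hk
    have htend : Filter.Tendsto (Stirling.stirlingSeq ∘ Nat.succ) Filter.atTop (nhds (Real.sqrt π)) :=
      Stirling.tendsto_stirlingSeq_sqrt_pi.comp (Filter.tendsto_add_atTop_nat 1)
    have := Stirling.stirlingSeq'_antitone.le_of_tendsto htend m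
    simpa [Function.comp, Nat.succ_eq_add_one, Nat.add_comm] using this
  have hkpos : (0:ℝ) < k := by exact_mod_cast hk
  have hdef : (k.factorial : ℝ) =
      Stirling.stirlingSeq k * (Real.sqrt (2 * k) * ((k : ℝ) / Real.exp 1) ^ k) := by
    rw [Stirling.stirlingSeq]
    field_simp
  rw [hdef]
  have hsp : 2 * Real.sqrt k ≤ Real.sqrt π * Real.sqrt (2 * k) := by
    rw [show (2:ℝ) * k = 2 * k by rfl, Real.sqrt_mul (by norm_num : (0:ℝ) ≤ 2),
      ← mul_assoc]
    have h4 : (2:ℝ) ≤ Real.sqrt π * Real.sqrt 2 := by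
      rw [← Real.sqrt_mul pi_pos.le]
      have : (4:ℝ) ≤ π * 2 := by nlinarith [Real.pi_gt_three]
      calc (2:ℝ) = Real.sqrt 4 := by
            rw [show (4:ℝ) = 2^2 by norm_num, Real.sqrt_sq (by norm_num)]
        _ ≤ Real.sqrt (π * 2) := Real.sqrt_le_sqrt this
    exact mul_le_mul_of_nonneg_right h4 (Real.sqrt_nonneg _)
  have hpow : (0:ℝ) ≤ ((k : ℝ) / Real.exp 1) ^ k := by positivity
  calc 2 * Real.sqrt k * ((k : ℝ) / Real.exp 1) ^ k
      ≤ (Real.sqrt π * Real.sqrt (2 * k)) * ((k : ℝ) / Real.exp 1) ^ k :=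
        mul_le_mul_of_nonneg_right hsp hpow
    _ ≤ Stirling.stirlingSeq k * (Real.sqrt (2 * k) * ((k : ℝ) / Real.exp 1) ^ k) := by
        rw [← mul_assoc]
        exact mul_le_mul_of_nonneg_right
          (mul_le_mul_of_nonneg_right h1 (Real.sqrt_nonneg _)) hpow

/-- for all sufficiently large `n` and all `2 ≤ k ≤ n`,
`((n−2)k)!/(k!)^(n−2) ≤ (n−2)^((n−2)k) / k^(n/2 − 1)` (real exponents). -/
theorem multinomial_bound :
    ∃ N : ℕ, ∀ n k : ℕ, N ≤ n → 2 ≤ k → k ≤ n →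
      (Nat.factorial ((n - 2) * k) : ℝ) / (Nat.factorial k : ℝ) ^ (n - 2)
        ≤ ((n : ℝ) - 2) ^ ((n - 2) * k) / (k : ℝ) ^ ((n : ℝ) / 2 - 1) := by
  refine ⟨100, fun n k hn hk2 hkn => ?_⟩
  set m : ℕ := n - 2 with hm
  have hn2 : 2 ≤ n := by omega
  have hnm : n = m + 2 := by omega
  have hm98 : 98 ≤ m := by omega
  have hmR : ((n : ℝ) - 2) = (m : ℝ) := by
    rw [hnm]; push_cast; ring
  set M : ℕ := m * k with hM
  have hk1 : (1:ℕ) ≤ k := by omega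
  have hM1 : 1 ≤ M := by
    have : 1 * 1 ≤ m * k := Nat.mul_le_mul (by omega) hk1
    simpa using this
  have hkR : (0:ℝ) < k := by exact_mod_cast hk1
  have hmRpos : (0:ℝ) < m := by
    have : (1:ℕ) ≤ m := by omega
    exact_mod_cast this
  have hfk : (0:ℝ) < (Nat.factorial k : ℝ) ^ m := by positivity
  have hrp : (0:ℝ) < (k : ℝ) ^ ((n : ℝ) / 2 - 1) := Real.rpow_pos_of_pos hkR _
  rw [hmR, div_le_div_iff₀ hfk hrp]
  -- rewrite the rpow as (√k)^m
  have hexp : (n : ℝ) / 2 - 1 = (m : ℝ) / 2 := by rw [hnm]; push_cast; ring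
  have hrw : (k : ℝ) ^ ((n : ℝ) / 2 - 1) = Real.sqrt k ^ m := by
    rw [hexp, Real.sqrt_eq_rpow, ← Real.rpow_natCast ((k:ℝ) ^ ((1:ℝ)/2)) m,
      ← Real.rpow_mul hkR.le]
    ring_nf
  rw [hrw]
  -- bounds
  have hup : (Nat.factorial M : ℝ) ≤
      6 * (m:ℝ)^2 * ((m:ℝ)^M * ((k:ℝ) / Real.exp 1) ^ M) := by
    have h1 := stirling_upper M hM1
    have hMle : (M : ℝ) ≤ 2 * (m:ℝ)^2 := by
      have : M ≤ 2 * m^2 := by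
        calc M = m * k := rfl
          _ ≤ m * (m + 2) := Nat.mul_le_mul_left m (by omega)
          _ ≤ 2 * m^2 := by nlinarith
      exact_mod_cast this
    have hsq : Real.sqrt M ≤ (M:ℝ) := by
      have h1M : (1:ℝ) ≤ M := by exact_mod_cast hM1
      calc Real.sqrt M ≤ Real.sqrt ((M:ℝ)^2) := Real.sqrt_le_sqrt (by nlinarith)
        _ = (M:ℝ) := Real.sqrt_sq (by positivity)
    have he3 : Real.exp 1 ≤ 3 := by
      have := Real.exp_one_lt_d9; linarith
    have hMd : ((M:ℝ) / Real.exp 1) ^ M = (m:ℝ)^M * ((k:ℝ) / Real.exp 1) ^ M := by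
      rw [← mul_pow]
      congr 1
      push_cast [hM]
      ring
    calc (Nat.factorial M : ℝ) ≤ Real.exp 1 * Real.sqrt M * ((M : ℝ) / Real.exp 1) ^ M := h1
      _ ≤ 3 * (2 * (m:ℝ)^2) * ((M : ℝ) / Real.exp 1) ^ M := by
          have hp : (0:ℝ) ≤ ((M : ℝ) / Real.exp 1) ^ M := by positivity
          apply mul_le_mul_of_nonneg_right _ hp
          have h0 : (0:ℝ) ≤ Real.sqrt M := Real.sqrt_nonneg _
          calc Real.exp 1 * Real.sqrt M ≤ 3 * Real.sqrt M :=
                mul_le_mul_of_nonneg_right he3 h0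
            _ ≤ 3 * (M:ℝ) := by linarith [hsq]
            _ ≤ 3 * (2 * (m:ℝ)^2) := by linarith
      _ = 6 * (m:ℝ)^2 * ((M : ℝ) / Real.exp 1) ^ M := by ring
      _ = 6 * (m:ℝ)^2 * ((m:ℝ)^M * ((k:ℝ) / Real.exp 1) ^ M) := by rw [hMd]
  have hlow : (2:ℝ)^m * (Real.sqrt k ^ m * ((k:ℝ) / Real.exp 1) ^ M) ≤
      (Nat.factorial k : ℝ) ^ m := by
    have h1 := stirling_lower k hk1
    calc (2:ℝ)^m * (Real.sqrt k ^ m * ((k:ℝ) / Real.exp 1) ^ M)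
        = (2 * Real.sqrt k * ((k:ℝ) / Real.exp 1) ^ k) ^ m := by
          rw [mul_pow, mul_pow, ← pow_mul, show M = k * m by rw [hM]; ring]
          ring
      _ ≤ (Nat.factorial k : ℝ) ^ m := by
          apply pow_le_pow_left₀ _ h1
          positivity
  have hkey : 6 * (m:ℝ)^2 ≤ (2:ℝ)^m := by
    have := six_sq_le_two_pow m (by omega)
    exact_mod_cast this
  calc (Nat.factorial M : ℝ) * Real.sqrt k ^ m
      ≤ 6 * (m:ℝ)^2 * ((m:ℝ)^M * ((k:ℝ) / Real.exp 1) ^ M) * Real.sqrt k ^ m := by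
        apply mul_le_mul_of_nonneg_right hup (by positivity)
    _ = (m:ℝ)^M * (6 * (m:ℝ)^2 * (Real.sqrt k ^ m * ((k:ℝ) / Real.exp 1) ^ M)) := by ring
    _ ≤ (m:ℝ)^M * ((2:ℝ)^m * (Real.sqrt k ^ m * ((k:ℝ) / Real.exp 1) ^ M)) := by
        apply mul_le_mul_of_nonneg_left _ (by positivity)
        apply mul_le_mul_of_nonneg_right hkey (by positivity)
    _ ≤ (m:ℝ)^M * (Nat.factorial k : ℝ) ^ m := mul_le_mul_of_nonneg_left hlow (by positivity)
end
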